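/- arXiv:2207.12874 — 8 statements merged into one kernel-verified Lean document; each statement's English description precedes it below -/
import Mathlib

section
/- For every C > 1 there exists n_C such that: if G = (V1, V2, E) is a bipartite graph with |V1|, |V2| ≥ n_C which contains no induced copy of K_{t1,t2} and no induced copy of its bipartite complement for any t1 ≥ C·log₂|V1| and t2 ≥ C·log₂|V2|, then the edge density e(G)/(|V1||V2|) lies between 1/(16C) and 1 − 1/(16C). -/
open Finset

/-- `G = (V1, V2, E)` is `C`-bipartite-Ramsey: for all `t1 ≥ C log₂ |V1|` and
`t2 ≥ C log₂ |V2|` there is no induced `K_{t1,t2}` nor its bipartite complement. -/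
def BipRamsey {V1 V2 : Type} [Fintype V1] [Fintype V2] (E : V1 → V2 → Prop) (C : ℝ) : Prop :=
  ∀ (A : Finset V1) (B : Finset V2),
    C * Real.logb 2 (Fintype.card V1) ≤ A.card →
    C * Real.logb 2 (Fintype.card V2) ≤ B.card →
    ¬ ((∀ a ∈ A, ∀ b ∈ B, E a b) ∨ (∀ a ∈ A, ∀ b ∈ B, ¬ E a b))

/-!
Suppose that fewer than `n₁ n₂ / (16 C)` pairs are edges and that `n₁ ≤ n₂`. By Markov's
inequality at least half of `V₂` has at most `n₁ / (8 C)` neighbours. Choose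
`t = ⌈C log₂ n₁⌉ ≤ n₁ / 2` vertices of `V₁` greedily: averaging over the unchosen ones (at least
half of `V₁`) always yields one adjacent to at most a `1 / (4 C)` fraction of the current common
non-neighbourhood. At least `(n₂ / 2) (1 - 1 / (4 C)) ^ t` vertices of `V₂` survive, and since
`1 - y ≥ 2 ^ (-2 y)` for `y ≤ 1 / 2` this is at least `(n₂ / 2) (2 n₁) ^ (-1/2) ≥ √(n₂ / 8)`,
which beats `C log₂ n₂` for large `n₂`: an induced empty `K_{t₁,t₂}`. The upper bound is the same
argument for the bipartite complement.
-/

theorem half_rpow_two_mul_le_one_sub {y : ℝ} (hy₀ : 0 ≤ y) (hy₁ : y ≤ 1 / 2) :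
    (2⁻¹ : ℝ) ^ (2 * y) ≤ 1 - y := by
  have h := rpow_one_add_le_one_add_mul_self (s := -1 / 2) (by norm_num)
    (p := 2 * y) (by linarith) (by linarith)
  norm_num at h
  linarith

theorem inv_two_mul_le_one_sub_pow_ceil {C x : ℝ} (hC : 1 ≤ C) (hx : 1 ≤ x) :
    (2 * x)⁻¹ ≤ (1 - 1 / (4 * C)) ^ (2 * ⌈C * Real.logb 2 x⌉₊) := by
  set t := ⌈C * Real.logb 2 x⌉₊
  have hlog : 0 ≤ Real.logb 2 x := Real.logb_nonneg one_lt_two hx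
  have ht : (t : ℝ) < C * Real.logb 2 x + 1 := Nat.ceil_lt_add_one (by positivity)
  calc (2 * x)⁻¹ = (2⁻¹ : ℝ) ^ (Real.logb 2 x + 1) := by
        rw [Real.inv_rpow zero_le_two, Real.rpow_add zero_lt_two, Real.rpow_logb zero_lt_two
          (by norm_num) (by linarith), Real.rpow_one, mul_comm]
    _ ≤ (2⁻¹ : ℝ) ^ (t / C) := by
        refine Real.rpow_le_rpow_of_exponent_ge (by norm_num) (by norm_num) ?_
        rw [div_le_iff₀ (by linarith)]
        nlinarith
    _ = ((2⁻¹ : ℝ) ^ (2 * (1 / (4 * C)))) ^ (2 * t) := by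
        rw [← Real.rpow_natCast, ← Real.rpow_mul (by norm_num)]
        congr 1
        push_cast
        field_simp
        ring
    _ ≤ _ := pow_le_pow_left₀ (by positivity)
        (half_rpow_two_mul_le_one_sub (by positivity) (by
          rw [div_le_div_iff₀ (by linarith) (by norm_num)]; linarith)) _

theorem eventually_eight_mul_sq_mul_logb_le (C : ℝ) :
    ∀ᶠ n : ℕ in Filter.atTop, 8 * (C * Real.logb 2 n) ^ 2 ≤ n := by
  have hlog2 : 0 < Real.log 2 := Real.log_pos one_lt_two
  have h := (Real.isLittleO_pow_log_id_atTop (n := 2)).bound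
    (c := Real.log 2 ^ 2 / (8 * C ^ 2 + 1)) (by positivity)
  filter_upwards [tendsto_natCast_atTop_atTop.eventually h] with n hn
  simp only [Real.norm_eq_abs, id, Nat.abs_cast, abs_pow, sq_abs] at hn
  rw [Real.logb, mul_div_assoc', div_pow, mul_div_assoc', div_le_iff₀ (by positivity)]
  rw [div_mul_eq_mul_div, le_div_iff₀ (by positivity)] at hn
  nlinarith [sq_nonneg (Real.log n), sq_nonneg C, hlog2]

theorem card_le_two_mul_card_filter_le {ι : Type*} (s : Finset ι) {f : ι → ℝ}
    (hf : ∀ i ∈ s, 0 ≤ f i) {c : ℝ} (h : 2 * ∑ i ∈ s, f i < c * #s) :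
    #s ≤ 2 * #{i ∈ s | f i ≤ c} := by
  have hsplit := card_filter_add_card_filter_not (s := s) (fun i => f i ≤ c)
  have hc : 0 < c := pos_of_mul_pos_left ((mul_nonneg zero_le_two (sum_nonneg hf)).trans_lt h)
    (Nat.cast_nonneg _)
  have hlarge : #{i ∈ s | ¬f i ≤ c} * c ≤ ∑ i ∈ s, f i :=
    calc #{i ∈ s | ¬f i ≤ c} * c ≤ ∑ i ∈ s with ¬f i ≤ c, f i := by
          simpa using card_nsmul_le_sum _ f c fun i hi => (not_le.1 (mem_filter.1 hi).2).le
      _ ≤ ∑ i ∈ s, f i := sum_le_sum_of_subset_of_nonneg (filter_subset _ _)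
          fun i hi _ => hf i hi
  have : (2 * #{i ∈ s | ¬f i ≤ c} : ℝ) < #s := by nlinarith
  have : 2 * #{i ∈ s | ¬f i ≤ c} < #s := by exact_mod_cast this
  omega

section Greedy

variable {α β : Type*} [Fintype α] (r : α → β → Prop) [∀ a b, Decidable (r a b)]

theorem exists_notMem_card_bipartiteAbove_le [DecidableEq α] {δ : ℝ} (hδ : 0 ≤ δ)
    (A : Finset α) (S : Finset β) (hA : 2 * (#A + 1) ≤ Fintype.card α)
    (hS : ∀ b ∈ S, (#(univ.bipartiteBelow r b) : ℝ) ≤ δ * Fintype.card α) :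
    ∃ a ∉ A, (#(S.bipartiteAbove r a) : ℝ) ≤ 2 * δ * #S := by
  have hAc : (Fintype.card α : ℝ) ≤ 2 * #Aᶜ := by
    rw [card_compl]; exact_mod_cast (by omega : Fintype.card α ≤ 2 * (Fintype.card α - #A))
  have hne : Aᶜ.Nonempty := by rw [← card_pos, card_compl]; omega
  suffices ∑ a ∈ Aᶜ, (#(S.bipartiteAbove r a) : ℝ) ≤ ∑ _a ∈ Aᶜ, 2 * δ * #S by
    obtain ⟨a, ha, hle⟩ := exists_le_of_sum_le hne this
    exact ⟨a, mem_compl.1 ha, hle⟩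
  calc ∑ a ∈ Aᶜ, (#(S.bipartiteAbove r a) : ℝ) ≤ ∑ a, (#(S.bipartiteAbove r a) : ℝ) :=
        sum_le_sum_of_subset_of_nonneg (subset_univ _) fun _ _ _ => Nat.cast_nonneg _
    _ = ∑ b ∈ S, (#(univ.bipartiteBelow r b) : ℝ) := by
        exact_mod_cast sum_card_bipartiteAbove_eq_sum_card_bipartiteBelow r
    _ ≤ #S * (δ * Fintype.card α) := by simpa using sum_le_sum hS
    _ ≤ ∑ _a ∈ Aᶜ, 2 * δ * #S := by
        rw [sum_const, nsmul_eq_mul]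
        nlinarith [mul_nonneg hδ (Nat.cast_nonneg (α := ℝ) #S)]

theorem exists_anticomplete_of_forall_card_bipartiteBelow_le {δ : ℝ} (hδ₀ : 0 ≤ δ)
    (hδ₁ : 2 * δ ≤ 1) (S₀ : Finset β)
    (hS₀ : ∀ b ∈ S₀, (#(univ.bipartiteBelow r b) : ℝ) ≤ δ * Fintype.card α) :
    ∀ k : ℕ, 2 * k ≤ Fintype.card α → ∃ (A : Finset α) (S : Finset β), #A = k ∧ S ⊆ S₀ ∧
      #S₀ * (1 - 2 * δ) ^ k ≤ #S ∧ ∀ a ∈ A, ∀ b ∈ S, ¬r a b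
  | 0, _ => ⟨∅, S₀, rfl, subset_rfl, by simp, by simp⟩
  | k + 1, hk => by
    classical
    obtain ⟨A, S, rfl, hSS₀, hS, hAS⟩ :=
      exists_anticomplete_of_forall_card_bipartiteBelow_le hδ₀ hδ₁ S₀ hS₀ k (by omega)
    obtain ⟨a, ha, hdeg⟩ :=
      exists_notMem_card_bipartiteAbove_le r hδ₀ A S hk fun b hb => hS₀ b (hSS₀ hb)
    refine ⟨insert a A, {b ∈ S | ¬r a b}, card_insert_of_notMem ha,
      (filter_subset _ _).trans hSS₀, ?_, ?_⟩
    · have hsplit : (#(S.bipartiteAbove r a) + #{b ∈ S | ¬r a b} : ℝ) = #S := by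
        exact_mod_cast card_filter_add_card_filter_not (r a)
      calc _ = (1 - 2 * δ) * (#S₀ * (1 - 2 * δ) ^ #A) := by ring
        _ ≤ (1 - 2 * δ) * #S := mul_le_mul_of_nonneg_left hS (by linarith)
        _ ≤ #{b ∈ S | ¬r a b} := by linarith
    · simp only [mem_insert, mem_filter]
      rintro a' (rfl | ha') b ⟨hb, hab⟩
      exacts [hab, hAS a' ha' b hb]

end Greedy

theorem exists_anticomplete_of_sixteen_mul_sum_card_lt {α β : Type*} [Fintype α] [Fintype β]
    (r : α → β → Prop) [∀ a b, Decidable (r a b)] {C : ℝ} (hC : 1 ≤ C)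
    (hα₂ : 2 ≤ Fintype.card α)
    (hα : 8 * (C * Real.logb 2 (Fintype.card α)) ^ 2 ≤ Fintype.card α)
    (hβ : 8 * (C * Real.logb 2 (Fintype.card β)) ^ 2 ≤ Fintype.card β)
    (hαβ : Fintype.card α ≤ Fintype.card β)
    (hr : 16 * C * ∑ b, (#(univ.bipartiteBelow r b) : ℝ) < Fintype.card α * Fintype.card β) :
    ∃ (A : Finset α) (B : Finset β), C * Real.logb 2 (Fintype.card α) ≤ #A ∧
      C * Real.logb 2 (Fintype.card β) ≤ #B ∧ ∀ a ∈ A, ∀ b ∈ B, ¬r a b := by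
  set n₁ := Fintype.card α
  set n₂ := Fintype.card β
  set L₁ := C * Real.logb 2 n₁
  have hn₁ : (2 : ℝ) ≤ n₁ := by exact_mod_cast hα₂
  have hn₁₂ : (n₁ : ℝ) ≤ n₂ := by exact_mod_cast hαβ
  have hL₁ : 1 ≤ L₁ := one_le_mul_of_one_le_of_one_le hC
    ((Real.le_logb_iff_rpow_le one_lt_two (by linarith)).2 (by simpa using hn₁))
  set S₀ : Finset β := {b | (#(univ.bipartiteBelow r b) : ℝ) ≤ 1 / (8 * C) * n₁}
  have hS₀ : (n₂ : ℝ) ≤ 2 * #S₀ := by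
    have := card_le_two_mul_card_filter_le (univ : Finset β) (fun b _ => Nat.cast_nonneg _)
      (c := 1 / (8 * C) * n₁) (by rw [card_univ]; field_simp; linarith)
    exact_mod_cast this
  have ht : 2 * ⌈L₁⌉₊ ≤ n₁ := by
    have := Nat.ceil_lt_add_one (by linarith : 0 ≤ L₁)
    exact_mod_cast (by nlinarith : (2 * ⌈L₁⌉₊ : ℝ) ≤ n₁)
  obtain ⟨A, S, hA, -, hS, hAS⟩ :=
    exists_anticomplete_of_forall_card_bipartiteBelow_le r (δ := 1 / (8 * C)) (by positivity)
      (by rw [mul_one_div, div_le_one (by positivity)]; linarith) S₀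
      (fun b hb => (mem_filter.1 hb).2) _ ht
  refine ⟨A, S, hA ▸ Nat.le_ceil L₁, ?_, hAS⟩
  have hq := inv_two_mul_le_one_sub_pow_ceil hC (by linarith : (1 : ℝ) ≤ n₁)
  rw [show 1 / (4 * C) = 2 * (1 / (8 * C)) by ring, pow_mul'] at hq
  set q := (1 - 2 * (1 / (8 * C))) ^ ⌈L₁⌉₊
  have hq₀ : 0 ≤ q :=
    pow_nonneg (by rw [mul_one_div, sub_nonneg, div_le_one (by positivity)]; linarith) _
  refine le_of_pow_le_pow_left₀ two_ne_zero (Nat.cast_nonneg _) ?_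
  calc (C * Real.logb 2 n₂) ^ 2 ≤ n₂ / 8 := by linarith
    _ ≤ ((n₂ : ℝ) / 2) ^ 2 * (2 * (n₁ : ℝ))⁻¹ := by
        rw [← div_eq_mul_inv, le_div_iff₀ (by positivity)]; nlinarith
    _ ≤ (#S₀ * q) ^ 2 := by rw [mul_pow]; gcongr; linarith
    _ ≤ #S ^ 2 := by gcongr

theorem card_filter_eq_sum_card_bipartiteBelow {α β : Type*} [Fintype α] [Fintype β]
    (r : α → β → Prop) [∀ a b, Decidable (r a b)] :
    #{p : α × β | r p.1 p.2} = ∑ b, #(univ.bipartiteBelow r b) := by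
  simp only [card_filter, Fintype.sum_prod_type, bipartiteBelow]
  exact sum_comm

theorem BipRamsey.compl {V1 V2 : Type} [Fintype V1] [Fintype V2] {E : V1 → V2 → Prop} {C : ℝ}
    (hG : BipRamsey E C) : BipRamsey (fun a b => ¬E a b) C :=
  fun A B hA hB h => hG A B hA hB (h.symm.imp (fun h a ha b hb => not_not.1 (h a ha b hb)) id)

theorem BipRamsey.card_mul_le_sixteen_mul_card_filter {V1 V2 : Type} [Fintype V1] [Fintype V2]
    {E : V1 → V2 → Prop} [∀ a b, Decidable (E a b)] {C : ℝ} (hG : BipRamsey E C) (hC : 1 ≤ C)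
    (h₁ : 2 ≤ Fintype.card V1)
    (h₁' : 8 * (C * Real.logb 2 (Fintype.card V1)) ^ 2 ≤ Fintype.card V1)
    (h₂ : 2 ≤ Fintype.card V2)
    (h₂' : 8 * (C * Real.logb 2 (Fintype.card V2)) ^ 2 ≤ Fintype.card V2) :
    (Fintype.card V1 * Fintype.card V2 : ℝ) ≤ 16 * C * #{p : V1 × V2 | E p.1 p.2} := by
  rw [card_filter_eq_sum_card_bipartiteBelow, Nat.cast_sum]
  by_contra! h
  rcases le_total (Fintype.card V1) (Fintype.card V2) with h₁₂ | h₂₁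
  · obtain ⟨A, B, hA, hB, hAB⟩ :=
      exists_anticomplete_of_sixteen_mul_sum_card_lt E hC h₁ h₁' h₂' h₁₂ h
    exact hG A B hA hB (Or.inr hAB)
  · have h' : 16 * C * ∑ a, (#(univ.bipartiteBelow (Function.swap E) a) : ℝ) <
        Fintype.card V2 * Fintype.card V1 := by
      have hswap : ∑ a, (#(univ.bipartiteAbove E a) : ℝ) =
          ∑ b, (#(univ.bipartiteBelow E b) : ℝ) := by
        exact_mod_cast sum_card_bipartiteAbove_eq_sum_card_bipartiteBelow E
      simp_rw [bipartiteBelow_swap, hswap, mul_comm (Fintype.card V2 : ℝ)]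
      exact h
    obtain ⟨B, A, hB, hA, hBA⟩ :=
      exists_anticomplete_of_sixteen_mul_sum_card_lt _ hC h₂ h₂' h₁' h₂₁ h'
    exact hG A B hA hB (Or.inr fun a ha b hb => hBA b hb a ha)

theorem stmt0 (C : ℝ) (hC : 1 < C) :
    ∃ nC : ℕ, ∀ (V1 V2 : Type) [Fintype V1] [Fintype V2]
      (E : V1 → V2 → Prop) [∀ a b, Decidable (E a b)],
      nC ≤ Fintype.card V1 → nC ≤ Fintype.card V2 →
      BipRamsey E C →
      1 / (16 * C) ≤
          (((Finset.univ.filter (fun p : V1 × V2 => E p.1 p.2)).card : ℝ) /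
            (Fintype.card V1 * Fintype.card V2)) ∧
      (((Finset.univ.filter (fun p : V1 × V2 => E p.1 p.2)).card : ℝ) /
            (Fintype.card V1 * Fintype.card V2)) ≤ 1 - 1 / (16 * C) := by
  obtain ⟨N, hN⟩ := Filter.eventually_atTop.1
    ((eventually_eight_mul_sq_mul_logb_le C).and (Filter.eventually_ge_atTop 2))
  refine ⟨N, fun V1 V2 _ _ E _ hN₁ hN₂ hG => ?_⟩
  obtain ⟨h₁', h₁⟩ := hN _ hN₁
  obtain ⟨h₂', h₂⟩ := hN _ hN₂
  have hedges := hG.card_mul_le_sixteen_mul_card_filter hC.le h₁ h₁' h₂ h₂'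
  have hnonedges := hG.compl.card_mul_le_sixteen_mul_card_filter hC.le h₁ h₁' h₂ h₂'
  have hsplit : (#{p : V1 × V2 | E p.1 p.2} + #{p : V1 × V2 | ¬E p.1 p.2} : ℝ) =
      Fintype.card V1 * Fintype.card V2 := by
    exact_mod_cast (card_filter_add_card_filter_not _).trans (by simp)
  have hpos : (0 : ℝ) < Fintype.card V1 * Fintype.card V2 :=
    mul_pos (by exact_mod_cast (by omega : 0 < Fintype.card V1))
      (by exact_mod_cast (by omega : 0 < Fintype.card V2))
  constructor
  · rw [div_le_div_iff₀ (by positivity) hpos]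
    linarith
  · have hfew : (Fintype.card V1 * Fintype.card V2 : ℝ) / (16 * C) ≤
        #{p : V1 × V2 | ¬E p.1 p.2} := by
      rw [div_le_iff₀ (by positivity)]
      linarith
    rw [div_le_iff₀ hpos, sub_mul, one_mul, one_div_mul_eq_div]
    linarith
end

section
/- For every C > 1 there exists n_C such that every C-bipartite-Ramsey graph G = (V1, V2, E) with |V1|, |V2| ≥ n_C contains at least 2|V1|/3 vertices in V1 whose degrees lie between |V2|/(32C) and (1 − 1/(32C))|V2|. -/
open Finset

/-- Neighbourhood of `u ∈ V1` in `V2`. -/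
def nbr {V1 V2 : Type} [Fintype V2] (E : V1 → V2 → Prop) [∀ a b, Decidable (E a b)]
    (u : V1) : Finset V2 := Finset.univ.filter (fun v => E u v)

open Real Filter

/-!
If fewer than `2|V₁|/3` vertices of `V₁` have degree in the middle range, then more than `|V₁|/6`
of them form a set `S` of vertices of degree at least `(1 - 1/(32C))|V₂|` in `G` or in its
bipartite complement. Such a set spans a biclique with sides of size `C log₂ |Vᵢ|`, by the
Kővári–Sós–Turán count: averaging over the `t`-subsets `A` of `X`, some `A` has at least
`|Y| (θ - t/|X|)^t` common neighbours when every `y ∈ Y` has `θ|X|` neighbours in `X`.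
If `|V₂| ≤ |V₁|`, take `t = ⌈C log₂ |V₂|⌉` vertices of `V₂` and their common neighbours in `S`;
otherwise first keep the (at least) half of `V₂` adjacent to all but a `1/(16C)` fraction of `S`,
and take `t = ⌈C log₂ |V₁|⌉` vertices of `S`. For large `n`,
`(1 - 1/(8C))^⌈C log₂ n⌉ ≥ e^{-1/4} n^{-1/2}`, which leaves room for `C log₂ n`.
-/

theorem Nat.choose_mul_div_pow_le_choose {f m t : ℕ} (htf : t ≤ f) (hm : 0 < m) :
    (m.choose t : ℝ) * (((f : ℝ) - t) / m) ^ t ≤ f.choose t := by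
  have hm' : (0 : ℝ) < m := by exact_mod_cast hm
  have hft : (0 : ℝ) ≤ f - t := by rw [sub_nonneg]; exact_mod_cast htf
  calc (m.choose t : ℝ) * (((f : ℝ) - t) / m) ^ t
      ≤ (m ^ t / t.factorial : ℝ) * (((f : ℝ) - t) / m) ^ t := by
        gcongr; exact Nat.choose_le_pow_div t m
    _ = ((f : ℝ) - t) ^ t / t.factorial := by
        rw [div_pow]; field_simp
    _ ≤ ((f + 1 - t : ℕ) ^ t : ℝ) / t.factorial := by
        gcongr
        rw [Nat.cast_sub (by omega)]; push_cast; linarith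
    _ ≤ f.choose t := Nat.pow_le_choose t f

section Counting

variable {α β : Type*} (R : α → β → Prop) [∀ a b, Decidable (R a b)]

theorem sum_card_commonNeighbors_powersetCard (X : Finset α) (Y : Finset β) (t : ℕ) :
    ∑ A ∈ X.powersetCard t, #{y ∈ Y | ∀ a ∈ A, R a y} = ∑ y ∈ Y, (#{x ∈ X | R x y}).choose t := by
  refine (sum_card_bipartiteAbove_eq_sum_card_bipartiteBelow (fun A y => ∀ a ∈ A, R a y)).trans
    (sum_congr rfl fun y _ => ?_)
  rw [← card_powersetCard]
  congr 1
  ext A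
  simp only [bipartiteBelow, mem_filter, mem_powersetCard, subset_iff]
  grind

theorem exists_mem_powersetCard_sum_choose_le (X : Finset α) (Y : Finset β) {t : ℕ}
    (ht : t ≤ #X) :
    ∃ A ∈ X.powersetCard t,
      ∑ y ∈ Y, (#{x ∈ X | R x y}).choose t ≤ #{y ∈ Y | ∀ a ∈ A, R a y} * (#X).choose t := by
  refine exists_le_of_sum_le (powersetCard_nonempty.2 ht) ?_
  rw [← sum_mul, sum_card_commonNeighbors_powersetCard, sum_const, card_powersetCard,
    smul_eq_mul, mul_comm]

theorem exists_complete_of_le_card_filter (X : Finset α) (Y : Finset β) {t : ℕ} {θ : ℝ}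
    (hθ : θ ≤ 1) (ht : t ≤ θ * #X) (hY : ∀ y ∈ Y, θ * #X ≤ #{x ∈ X | R x y}) :
    ∃ A ⊆ X, #A = t ∧ ∃ B ⊆ Y, (∀ a ∈ A, ∀ b ∈ B, R a b) ∧
      #Y * (θ - t / #X) ^ t ≤ #B := by
  rcases Nat.eq_zero_or_pos t with rfl | htpos
  · exact ⟨∅, empty_subset _, card_empty, Y, subset_rfl, by simp, by simp⟩
  have htX : t ≤ #X := by
    have : (t : ℝ) ≤ #X := ht.trans (mul_le_of_le_one_left (Nat.cast_nonneg _) hθ)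
    exact_mod_cast this
  have hX : (0 : ℝ) < #X := by exact_mod_cast htpos.trans_le htX
  obtain ⟨A, hA, hsum⟩ := exists_mem_powersetCard_sum_choose_le R X Y htX
  rw [mem_powersetCard] at hA
  refine ⟨A, hA.1, hA.2, {y ∈ Y | ∀ a ∈ A, R a y}, filter_subset _ _,
    fun a ha b hb => (mem_filter.1 hb).2 a ha, ?_⟩
  have hbase : 0 ≤ θ - t / #X := by rw [sub_nonneg, div_le_iff₀ hX]; linarith
  have hchoose : (0 : ℝ) < (#X).choose t := by exact_mod_cast Nat.choose_pos htX
  have hper : ∀ y ∈ Y, (θ - t / #X) ^ t * (#X).choose t ≤ ((#{x ∈ X | R x y}).choose t : ℝ) := by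
    intro y hy
    have hty : t ≤ #{x ∈ X | R x y} := by exact_mod_cast ht.trans (hY y hy)
    calc (θ - t / #X) ^ t * (#X).choose t
        ≤ (#X).choose t * (((#{x ∈ X | R x y} : ℝ) - t) / #X) ^ t := by
          rw [mul_comm]; gcongr
          rw [sub_div, sub_le_sub_iff_right, le_div_iff₀ hX]
          exact hY y hy
      _ ≤ _ := Nat.choose_mul_div_pow_le_choose hty (by exact_mod_cast hX)
  refine le_of_mul_le_mul_right ?_ hchoose
  calc #Y * (θ - t / #X) ^ t * (#X).choose t
      = ∑ y ∈ Y, (θ - t / #X) ^ t * (#X).choose t := by rw [sum_const, nsmul_eq_mul, mul_assoc]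
    _ ≤ ∑ y ∈ Y, ((#{x ∈ X | R x y}).choose t : ℝ) := sum_le_sum hper
    _ ≤ _ := by exact_mod_cast hsum

end Counting

theorem Finset.sum_le_card_mul_add_card_filter_mul {ι : Type*} (s : Finset ι) (f : ι → ℝ)
    {a M : ℝ} (hM : ∀ i ∈ s, f i ≤ M) :
    ∑ i ∈ s, f i ≤ #s * a + #{i ∈ s | a ≤ f i} * (M - a) := by
  have hhigh : ∑ i ∈ s with a ≤ f i, f i ≤ #{i ∈ s | a ≤ f i} * M := by
    simpa using sum_le_card_nsmul _ f M fun i hi => hM i (mem_filter.1 hi).1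
  have hlow : ∑ i ∈ s with ¬a ≤ f i, f i ≤ #{i ∈ s | ¬a ≤ f i} * a := by
    simpa using sum_le_card_nsmul _ f a fun i hi => (not_le.1 (mem_filter.1 hi).2).le
  have hcard : (#{i ∈ s | a ≤ f i} : ℝ) + #{i ∈ s | ¬a ≤ f i} = #s := by
    exact_mod_cast card_filter_add_card_filter_not _
  rw [← sum_filter_add_sum_filter_not s (a ≤ f ·)]
  linear_combination hhigh + hlow + a * hcard

theorem Finset.lt_card_filter_lt_or_lt_card_filter_lt {ι : Type*} (s : Finset ι) (f : ι → ℝ)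
    {a b : ℝ} (h : (#{i ∈ s | a ≤ f i ∧ f i ≤ b} : ℝ) < 2 * #s / 3) :
    (#s : ℝ) / 6 < #{i ∈ s | f i < a} ∨ (#s : ℝ) / 6 < #{i ∈ s | b < f i} := by
  classical
  have hcover : s ⊆ {i ∈ s | a ≤ f i ∧ f i ≤ b} ∪ {i ∈ s | f i < a} ∪ {i ∈ s | b < f i} := by
    intro i hi
    simp only [mem_union, mem_filter]
    grind
  have hcard := (card_le_card hcover).trans
    ((card_union_le _ _).trans (Nat.add_le_add_right (card_union_le _ _) _))
  have hcard' : (#s : ℝ) ≤ #{i ∈ s | a ≤ f i ∧ f i ≤ b} + #{i ∈ s | f i < a} +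
      #{i ∈ s | b < f i} := by exact_mod_cast hcard
  by_contra! h'
  linarith [h'.1, h'.2]

theorem exp_neg_two_mul_mul_le_one_sub_pow {x : ℝ} (hx0 : 0 ≤ x) (hx : x ≤ 1 / 2) (t : ℕ) :
    exp (-(2 * x * t)) ≤ (1 - x) ^ t := by
  have hbase : exp (-(2 * x)) ≤ 1 - x := by
    have h1 := add_one_le_exp (2 * x)
    have h2 : exp (-(2 * x)) * exp (2 * x) = 1 := by rw [← exp_add]; simp
    nlinarith [exp_pos (-(2 * x))]
  calc exp (-(2 * x * t)) = exp (-(2 * x)) ^ t := by rw [← exp_nat_mul]; ring_nf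
    _ ≤ (1 - x) ^ t := by gcongr

theorem logb_natCast_le_logb_natCast {b : ℝ} (hb : 1 < b) {n m : ℕ} (h : n ≤ m) :
    logb b n ≤ logb b m := by
  rcases Nat.eq_zero_or_pos n with rfl | hn
  · rw [Nat.cast_zero, logb_zero]
    exact div_nonneg (log_natCast_nonneg m) (log_pos hb).le
  · exact logb_le_logb_of_le hb (by exact_mod_cast hn) (by exact_mod_cast h)

theorem exp_logb_two_div_four_le_sqrt {x : ℝ} (hx : 1 ≤ x) : exp (logb 2 x / 4) ≤ √x := by
  have hx0 : 0 < x := by linarith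
  rw [← exp_log (sqrt_pos.2 hx0), log_sqrt hx0.le, exp_le_exp, logb, div_div,
    div_le_div_iff₀ (by positivity) two_pos]
  nlinarith [log_two_gt_d9, log_nonneg hx]

theorem eventually_mul_logb_le_mul_sqrt (a : ℝ) {c : ℝ} (hc : 0 < c) :
    ∀ᶠ n : ℕ in atTop, a * logb 2 n ≤ c * √n := by
  have hlog2 := log_pos one_lt_two
  have h := ((isLittleO_log_rpow_atTop one_half_pos).const_mul_left a).bound
    (by positivity : 0 < c * log 2)
  filter_upwards [tendsto_natCast_atTop_atTop.eventually h] with n hn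
  rw [norm_of_nonneg (rpow_nonneg n.cast_nonneg _)] at hn
  rw [sqrt_eq_rpow, logb, mul_div_assoc', div_le_iff₀ hlog2]
  calc a * log n ≤ ‖a * log n‖ := le_norm_self _
    _ ≤ _ := hn
    _ = _ := by ring

-- With `t = ⌈C log₂ n⌉`, the side length sought: `t` is a small fraction of `n`, and `n/6`
-- vertices, thinned by a factor `1 - 1/(8C)` per element of a `t`-set, still number `C log₂ n`.
def IsLargeFor (C : ℝ) (n : ℕ) : Prop :=
  96 * C * ⌈C * logb 2 n⌉₊ ≤ n ∧ C * logb 2 n ≤ n / 6 * (1 - 1 / (8 * C)) ^ ⌈C * logb 2 n⌉₊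

theorem eventually_isLargeFor {C : ℝ} (hC : 1 ≤ C) : ∀ᶠ n : ℕ in atTop, IsLargeFor C n := by
  filter_upwards [eventually_mul_logb_le_mul_sqrt (192 * C ^ 2) one_pos,
    eventually_mul_logb_le_mul_sqrt C (c := exp (-1 / 4) / 6) (by positivity),
    eventually_ge_atTop 1, tendsto_natCast_atTop_atTop.eventually (eventually_ge_atTop (192 * C))]
    with n hsmall hlarge hn1 hn
  have hn1' : (1 : ℝ) ≤ n := by exact_mod_cast hn1
  have hL : 0 ≤ logb 2 n := logb_nonneg one_lt_two hn1'
  have ht : (⌈C * logb 2 n⌉₊ : ℝ) ≤ C * logb 2 n + 1 :=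
    (Nat.ceil_lt_add_one (by positivity)).le
  have hsqrt : √n ≤ n := by nlinarith [mul_self_sqrt (Nat.cast_nonneg n), one_le_sqrt.2 hn1']
  have hside : 96 * C * ⌈C * logb 2 n⌉₊ ≤ n :=
    calc 96 * C * ⌈C * logb 2 n⌉₊ ≤ 96 * C * (C * logb 2 n + 1) := by gcongr
      _ = 192 * C ^ 2 * logb 2 n / 2 + 192 * C / 2 := by ring
      _ ≤ n / 2 + n / 2 := by gcongr; linarith
      _ = n := by ring
  refine ⟨hside, ?_⟩
  have hexp : exp (logb 2 n / 4) * √n ≤ n :=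
    calc exp (logb 2 n / 4) * √n ≤ √n * √n := by gcongr; exact exp_logb_two_div_four_le_sqrt hn1'
      _ = n := mul_self_sqrt n.cast_nonneg
  calc C * logb 2 n ≤ exp (-1 / 4) / 6 * √n := hlarge
    _ ≤ n / 6 * exp (-(logb 2 n + 1) / 4) := by
        rw [show -(logb 2 n + 1) / 4 = -1 / 4 + -(logb 2 n / 4) by ring, exp_add, exp_neg]
        field_simp
        nlinarith [mul_le_mul_of_nonneg_left hexp (exp_pos (-1 / 4)).le]
    _ ≤ n / 6 * exp (-(2 * (1 / (8 * C)) * ⌈C * logb 2 n⌉₊)) := by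
        gcongr
        rw [neg_div, neg_le_neg_iff, show 2 * (1 / (8 * C)) * (⌈C * logb 2 n⌉₊ : ℝ) =
          ⌈C * logb 2 n⌉₊ / (4 * C) by ring, div_le_iff₀ (by positivity)]
        nlinarith
    _ ≤ _ := by
        gcongr
        exact exp_neg_two_mul_mul_le_one_sub_pow (by positivity)
          (by rw [div_le_div_iff₀ (by positivity) two_pos]; linarith) _

section Biclique

variable {V1 V2 : Type} [Fintype V2] (R : V1 → V2 → Prop)
  [∀ a b, Decidable (R a b)] {C ε : ℝ} {S : Finset V1}

def HasLargeBiclique [Fintype V1] (C : ℝ) : Prop :=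
  ∃ (A : Finset V1) (B : Finset V2), C * logb 2 (Fintype.card V1) ≤ #A ∧
    C * logb 2 (Fintype.card V2) ≤ #B ∧ ∀ a ∈ A, ∀ b ∈ B, R a b

theorem card_nbr_not (x : V1) :
    (#(nbr (fun x y => ¬R x y) x) : ℝ) = Fintype.card V2 - #(nbr R x) := by
  rw [eq_sub_iff_add_eq', ← card_univ]
  exact_mod_cast card_filter_add_card_filter_not _

theorem half_card_le_card_filter_le_card_filter (hε : 0 < ε) (hS : S.Nonempty)
    (hdeg : ∀ x ∈ S, (1 - ε) * Fintype.card V2 ≤ #(nbr R x)) :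
    (Fintype.card V2 : ℝ) / 2 ≤ #{y | (1 - 2 * ε) * #S ≤ #{x ∈ S | R x y}} := by
  have hS0 : (0 : ℝ) < #S := by exact_mod_cast hS.card_pos
  have hupper := sum_le_card_mul_add_card_filter_mul univ (fun y => (#{x ∈ S | R x y} : ℝ))
    (a := (1 - 2 * ε) * #S) (M := #S) fun y _ => by exact_mod_cast card_filter_le _ _
  have hdouble : ∑ x ∈ S, (#(nbr R x) : ℝ) = ∑ y, (#{x ∈ S | R x y} : ℝ) := by
    exact_mod_cast sum_card_bipartiteAbove_eq_sum_card_bipartiteBelow R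
  have hlower : #S * ((1 - ε) * Fintype.card V2) ≤ ∑ x ∈ S, (#(nbr R x) : ℝ) := by
    simpa using card_nsmul_le_sum S _ _ hdeg
  rw [card_univ] at hupper
  have key : #S * ε * (Fintype.card V2 - 2 * #{y | (1 - 2 * ε) * #S ≤ #{x ∈ S | R x y}}) ≤ 0 := by
    linarith
  linarith [nonpos_of_mul_nonpos_right key (by positivity)]

theorem one_div_thirtyTwo_mul_facts {C : ℝ} (hC : 1 ≤ C) :
    0 < 1 / (32 * C) ∧ 1 / (32 * C) ≤ 1 / 32 ∧ 1 / (8 * C) = 4 * (1 / (32 * C)) ∧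
      1 / (96 * C) = 1 / (32 * C) / 3 := by
  have hC0 : 0 < C := by linarith
  exact ⟨by positivity, by gcongr; linarith, by field_simp; ring, by field_simp; ring⟩

theorem hasLargeBiclique_of_card_right_le [Fintype V1] (hC : 1 ≤ C)
    (hn : Fintype.card V2 ≤ Fintype.card V1) (h1 : IsLargeFor C (Fintype.card V1))
    (h2 : IsLargeFor C (Fintype.card V2)) (hS : (Fintype.card V1 : ℝ) / 6 ≤ #S)
    (hdeg : ∀ x ∈ S, (1 - 1 / (32 * C)) * Fintype.card V2 ≤ #(nbr R x)) :
    HasLargeBiclique R C := by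
  set n₁ := Fintype.card V1
  set n₂ := Fintype.card V2
  set t₂ := ⌈C * logb 2 n₂⌉₊
  have hC0 : 0 < C := by linarith
  have ht : t₂ ≤ ⌈C * logb 2 n₁⌉₊ := Nat.ceil_mono
    (mul_le_mul_of_nonneg_left (logb_natCast_le_logb_natCast one_lt_two hn) hC0.le)
  have hsmall : (t₂ : ℝ) / n₂ ≤ 1 / (96 * C) := div_le_of_le_mul₀ (by positivity)
    (by positivity) (by rw [one_div_mul_eq_div, le_div_iff₀ (by positivity)]; linarith [h2.1])
  obtain ⟨hε0, hε1, h8, h96⟩ := one_div_thirtyTwo_mul_facts hC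
  have hb0 : 0 ≤ 1 - 1 / (8 * C) := by linarith
  have hb1 : 1 - 1 / (8 * C) ≤ 1 := by linarith
  have hθ : (t₂ : ℝ) ≤ (1 - 1 / (32 * C)) * n₂ := by
    nlinarith [h2.1, mul_le_mul_of_nonneg_right hε1 (Nat.cast_nonneg (α := ℝ) n₂),
      Nat.cast_nonneg (α := ℝ) t₂]
  obtain ⟨B, -, hB, A, -, hBA, hA⟩ := exists_complete_of_le_card_filter (fun y x => R x y) univ S
    (t := t₂) (θ := 1 - 1 / (32 * C)) (by linarith) (by rwa [card_univ])
    (fun x hx => by rw [card_univ]; exact hdeg x hx)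
  refine ⟨A, B, ?_, hB ▸ Nat.le_ceil _, fun a ha b hb => hBA b hb a ha⟩
  rw [card_univ] at hA
  calc C * logb 2 n₁ ≤ n₁ / 6 * (1 - 1 / (8 * C)) ^ ⌈C * logb 2 n₁⌉₊ := h1.2
    _ ≤ #S * (1 - 1 / (8 * C)) ^ t₂ :=
        mul_le_mul hS (pow_le_pow_of_le_one hb0 hb1 ht)
          (pow_nonneg hb0 _) (by positivity)
    _ ≤ #S * (1 - 1 / (32 * C) - t₂ / n₂) ^ t₂ := by
        refine mul_le_mul_of_nonneg_left (pow_le_pow_left₀ hb0 ?_ _) (by positivity)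
        linarith
    _ ≤ #A := hA

theorem hasLargeBiclique_of_card_left_le [Fintype V1] (hC : 1 ≤ C)
    (hn : Fintype.card V1 ≤ Fintype.card V2) (h1 : IsLargeFor C (Fintype.card V1))
    (h2 : IsLargeFor C (Fintype.card V2)) (hS : (Fintype.card V1 : ℝ) / 6 < #S)
    (hdeg : ∀ x ∈ S, (1 - 1 / (32 * C)) * Fintype.card V2 ≤ #(nbr R x)) :
    HasLargeBiclique R C := by
  set n₁ := Fintype.card V1
  set n₂ := Fintype.card V2
  set t₁ := ⌈C * logb 2 n₁⌉₊
  have hC0 : 0 < C := by linarith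
  have hS0 : (0 : ℝ) < #S := lt_of_le_of_lt (by positivity) hS
  have ht : t₁ ≤ ⌈C * logb 2 n₂⌉₊ := Nat.ceil_mono
    (mul_le_mul_of_nonneg_left (logb_natCast_le_logb_natCast one_lt_two hn) hC0.le)
  set Y : Finset V2 := {y | (1 - 2 * (1 / (32 * C))) * #S ≤ #{x ∈ S | R x y}}
  have hY : (n₂ : ℝ) / 2 ≤ #Y := half_card_le_card_filter_le_card_filter R (by positivity)
    (card_pos.1 (by exact_mod_cast hS0)) hdeg
  obtain ⟨hε0, hε1, h8, -⟩ := one_div_thirtyTwo_mul_facts hC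
  have hb0 : 0 ≤ 1 - 1 / (8 * C) := by linarith
  have hb1 : 1 - 1 / (8 * C) ≤ 1 := by linarith
  have ht₁ : (t₁ : ℝ) ≤ 2 * (1 / (32 * C)) * #S := by
    have : 96 * C * t₁ < 6 * #S := by linarith [h1.1]
    rw [show 2 * (1 / (32 * C)) * #S = #S / (16 * C) by field_simp; ring,
      le_div_iff₀ (by positivity)]
    linarith
  obtain ⟨A, -, hA, B, -, hAB, hB⟩ := exists_complete_of_le_card_filter R S _ (t := t₁)
    (θ := 1 - 2 * (1 / (32 * C))) (by linarith)
    (ht₁.trans (mul_le_mul_of_nonneg_right (by linarith) hS0.le)) (fun y hy => (mem_filter.1 hy).2)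
  refine ⟨A, B, hA ▸ Nat.le_ceil _, ?_, hAB⟩
  have hsmall : (t₁ : ℝ) / #S ≤ 2 * (1 / (32 * C)) := by rwa [div_le_iff₀ hS0]
  calc C * logb 2 n₂ ≤ n₂ / 6 * (1 - 1 / (8 * C)) ^ ⌈C * logb 2 n₂⌉₊ := h2.2
    _ ≤ #Y * (1 - 1 / (8 * C)) ^ t₁ := by
        gcongr ?_ * ?_
        · linarith
        · exact pow_le_pow_of_le_one hb0 hb1 ht
    _ ≤ #Y * (1 - 2 * (1 / (32 * C)) - t₁ / #S) ^ t₁ := by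
        refine mul_le_mul_of_nonneg_left (pow_le_pow_left₀ hb0 ?_ _) (by positivity)
        linarith
    _ ≤ #B := hB

theorem hasLargeBiclique_of_dense_subset [Fintype V1] (hC : 1 ≤ C)
    (h1 : IsLargeFor C (Fintype.card V1)) (h2 : IsLargeFor C (Fintype.card V2))
    (hS : (Fintype.card V1 : ℝ) / 6 < #S)
    (hdeg : ∀ x ∈ S, (1 - 1 / (32 * C)) * Fintype.card V2 ≤ #(nbr R x)) :
    HasLargeBiclique R C := by
  rcases le_total (Fintype.card V2) (Fintype.card V1) with hn | hn
  · exact hasLargeBiclique_of_card_right_le R hC hn h1 h2 hS.le hdeg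
  · exact hasLargeBiclique_of_card_left_le R hC hn h1 h2 hS hdeg

end Biclique

theorem stmt1 (C : ℝ) (hC : 1 < C) :
    ∃ nC : ℕ, ∀ (V1 V2 : Type) [Fintype V1] [Fintype V2]
      (E : V1 → V2 → Prop) [∀ a b, Decidable (E a b)],
      nC ≤ Fintype.card V1 → nC ≤ Fintype.card V2 →
      BipRamsey E C →
      2 * (Fintype.card V1 : ℝ) / 3 ≤
        ((Finset.univ.filter (fun u : V1 =>
            (Fintype.card V2 : ℝ) / (32 * C) ≤ ((nbr E u).card : ℝ) ∧
            ((nbr E u).card : ℝ) ≤ (1 - 1 / (32 * C)) * Fintype.card V2)).card : ℝ) := by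
  obtain ⟨N, hN⟩ := eventually_atTop.1 (eventually_isLargeFor hC.le)
  refine ⟨N, fun V1 V2 _ _ E _ h1 h2 hRam => ?_⟩
  by_contra! hfew
  have hsplit := lt_card_filter_lt_or_lt_card_filter_lt univ (fun u => (#(nbr E u) : ℝ))
    (by rwa [card_univ])
  rw [card_univ] at hsplit
  rcases hsplit with hlow | hhigh
  · obtain ⟨A, B, hA, hB, hAB⟩ := hasLargeBiclique_of_dense_subset (fun x y => ¬E x y) hC.le
      (hN _ h1) (hN _ h2) hlow fun x hx => by
        rw [card_nbr_not, one_sub_mul, one_div_mul_eq_div]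
        exact sub_le_sub_left (mem_filter.1 hx).2.le _
    exact hRam A B hA hB (Or.inr hAB)
  · obtain ⟨A, B, hA, hB, hAB⟩ := hasLargeBiclique_of_dense_subset E hC.le (hN _ h1) (hN _ h2)
      hhigh fun x hx => (mem_filter.1 hx).2.le
    exact hRam A B hA hB (Or.inl hAB)
end

section
/- For all δ, B > 0 there exist C, d₀ ≥ 1 such that the following holds. Suppose A₁, …, A_K are subsets of the integer interval [−M, M] with K ≥ CM and |A_i| ≥ δM ≥ 2 for all i ∈ [K]. Then there exist a ∈ ℤ and d ∈ ℕ with 1 ≤ d ≤ d₀ such that the arithmetic progression {a + i·d : 0 ≤ i ≤ BM²} is contained in the sumset A₁ + A₂ + ⋯ + A_K. -/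
/-!
By pigeonhole on blocks of length `g > 4/δ`, each `A j` contains two elements at distance
`e j ∈ (0, g)`, and a second pigeonhole makes `e j = d` for at least `K/g` indices. Choosing in each
`A j` either a base point `x j` or `x j + d * t j` realises every `∑ x j + s * d` with `s` a subset
sum of the `t j`. If `δM < 2g`, the steps `t j = 1` alone give `K/g ≥ BM²` consecutive values.
Otherwise keep `2M + 1` unit steps and, for every other `j`, take the extreme elements of a
densest residue class of `A j` mod `d`: their distance is `d * t j` with `δM/(2g) ≤ t j ≤ 2M`.
As every step is at most one more than the number of unit steps, the subset sums fill all of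
`[0, ∑ t j]`, an interval of length at least about `KδM/g ≥ BM²`.
-/

open Finset

theorem Finset.exists_card_le_mul_card_fiber {α β : Type*} [DecidableEq β] {s : Finset α}
    {t : Finset β} {f : α → β} (hf : ∀ a ∈ s, f a ∈ t) (ht : t.Nonempty) :
    ∃ y ∈ t, #s ≤ #t * #{x ∈ s | f x = y} := by
  obtain ⟨y, hy, hfib⟩ := exists_le_card_fiber_of_nsmul_le_card_of_maps_to hf ht
    (b := (#s : ℚ) / #t) (by rw [nsmul_eq_mul]; field_simp [ht.card_pos.ne']; rfl)
  refine ⟨y, hy, ?_⟩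
  rw [div_le_iff₀ (by exact_mod_cast ht.card_pos)] at hfib
  exact_mod_cast (by linarith : (#s : ℚ) ≤ #t * #{x ∈ s | f x = y})

theorem exists_add_mem_Ioo_of_subset_Icc {A : Finset ℤ} {a : ℤ} {L g : ℕ}
    (hA : A ⊆ Icc a (a + L)) (h : L < g * (#A - 1)) : ∃ x ∈ A, ∃ e ∈ Ioo 0 g, x + (e : ℤ) ∈ A := by
  have hg : 0 < g := Nat.pos_of_mul_pos_right (by omega : 0 < g * (#A - 1))
  have hmaps : ∀ x ∈ A, (x - a).toNat / g ∈ range (L / g + 1) := fun x hx => by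
    have := mem_Icc.1 (hA hx)
    exact mem_range_succ_iff.2 (Nat.div_le_div_right (by omega))
  have hcard : #(range (L / g + 1)) < #A := by
    rw [card_range]
    have : L / g < #A - 1 := (Nat.div_lt_iff_lt_mul hg).2 (by rwa [mul_comm] at h)
    exact Nat.add_lt_of_lt_sub this
  obtain ⟨x, hx, y, hy, hne, hxy⟩ := exists_ne_map_eq_of_card_lt_of_maps_to hcard hmaps
  wlog hlt : x < y generalizing x y
  · exact this y hy x hx hne.symm hxy.symm (by omega)
  have hxa := (mem_Icc.1 (hA hx)).1
  have hx' := Nat.div_add_mod (x - a).toNat g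
  have hy' := Nat.div_add_mod (y - a).toNat g
  rw [hxy] at hx'
  generalize g * ((y - a).toNat / g) = q at hx' hy'
  have := Nat.mod_lt (x - a).toNat hg
  have := Nat.mod_lt (y - a).toNat hg
  refine ⟨x, hx, (y - x).toNat, mem_Ioo.2 ⟨by omega, by omega⟩, ?_⟩
  rwa [Int.toNat_of_nonneg (by omega), add_sub_cancel]

theorem exists_add_mul_mem_and_card_le_mul {A : Finset ℤ} (hA : A.Nonempty) {d : ℕ} (hd : 0 < d) :
    ∃ x ∈ A, ∃ t : ℕ, x + d * t ∈ A ∧ #A ≤ d * (t + 1) := by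
  have hd' : (0 : ℤ) < d := by exact_mod_cast hd
  have hmaps : ∀ x ∈ A, x % d ∈ Ico (0 : ℤ) d := fun x _ =>
    mem_Ico.2 ⟨Int.emod_nonneg x hd'.ne', Int.emod_lt_of_pos x hd'⟩
  obtain ⟨r, -, hr⟩ := exists_card_le_mul_card_fiber hmaps (nonempty_Ico.2 hd')
  rw [Int.card_Ico, sub_zero, Int.toNat_natCast] at hr
  set F := {x ∈ A | x % d = r}
  have hF : F.Nonempty := card_pos.1 (Nat.pos_of_mul_pos_left (hA.card_pos.trans_le hr))
  have hdvd : ∀ z ∈ F, (d : ℤ) ∣ z - F.min' hF := fun z hz =>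
    Int.ModEq.dvd (((mem_filter.1 (F.min'_mem hF)).2).trans (mem_filter.1 hz).2.symm)
  obtain ⟨t, ht⟩ := hdvd _ (F.max'_mem hF)
  have ht0 : 0 ≤ t := by
    have := F.min'_le _ (F.max'_mem hF)
    nlinarith
  have hsub : F ⊆ (range (t.toNat + 1)).image (fun k : ℕ => F.min' hF + d * k) := by
    intro z hz
    obtain ⟨k, hk⟩ := hdvd z hz
    have hk0 : 0 ≤ k := by nlinarith [F.min'_le z hz]
    have hkt : k ≤ t := by nlinarith [F.le_max' z hz]
    exact mem_image.2 ⟨k.toNat, mem_range.2 (by omega), by rw [Int.toNat_of_nonneg hk0]; omega⟩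
  refine ⟨F.min' hF, (mem_filter.1 (F.min'_mem hF)).1, t.toNat, ?_, hr.trans ?_⟩
  · rw [Int.toNat_of_nonneg ht0, ← ht, add_sub_cancel]
    exact (mem_filter.1 (F.max'_mem hF)).1
  · exact Nat.mul_le_mul_left d ((card_le_card hsub).trans (card_image_le.trans (card_range _).le))

theorem exists_subset_sum_le_le_add {ι : Type*} (t : ι → ℕ) (L : ℕ) (v : Finset ι)
    (hv : ∀ j ∈ v, t j ≤ L + 1) {s : ℕ} (hs : s ≤ L + ∑ j ∈ v, t j) :
    ∃ T ⊆ v, ∑ j ∈ T, t j ≤ s ∧ s ≤ L + ∑ j ∈ T, t j := by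
  classical
  induction v using Finset.induction_on generalizing s with
  | empty => exact ⟨∅, subset_refl _, by simpa using hs⟩
  | @insert a v ha ih =>
    have hv' : ∀ j ∈ v, t j ≤ L + 1 := fun j hj => hv j (mem_insert_of_mem hj)
    rw [sum_insert ha] at hs
    by_cases hsv : s ≤ L + ∑ j ∈ v, t j
    · obtain ⟨T, hTv, hT⟩ := ih hv' hsv
      exact ⟨T, hTv.trans (subset_insert a v), hT⟩
    · have hta := hv a (mem_insert_self a v)
      obtain ⟨T, hTv, hT⟩ := ih hv' (s := s - t a) (by omega)
      have haT : a ∉ T := fun h => ha (hTv h)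
      refine ⟨insert a T, insert_subset_insert a hTv, ?_⟩
      rw [sum_insert haT]
      omega

theorem exists_subset_sum_eq {ι : Type*} (t : ι → ℕ) {u P : Finset ι} (hPu : P ⊆ u)
    (hP : ∀ j ∈ P, t j = 1) (ht : ∀ j ∈ u, j ∉ P → t j ≤ #P + 1) {s : ℕ}
    (hs : s ≤ ∑ j ∈ u, t j) : ∃ T ⊆ u, ∑ j ∈ T, t j = s := by
  classical
  have hsumP : ∑ j ∈ P, t j = #P := by rw [sum_congr rfl hP, card_eq_sum_ones]
  rw [← sum_sdiff hPu, hsumP, add_comm] at hs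
  obtain ⟨T₀, hT₀, hT₀s, hsT₀⟩ := exists_subset_sum_le_le_add t #P (u \ P)
    (fun j hj => ht j (mem_sdiff.1 hj).1 (mem_sdiff.1 hj).2) hs
  obtain ⟨Q, hQP, hQ⟩ := exists_subset_card_eq (s := P) (n := s - ∑ j ∈ T₀, t j) (by omega)
  have hdisj : Disjoint T₀ Q :=
    disjoint_of_subset_left hT₀ (disjoint_of_subset_right hQP sdiff_disjoint)
  refine ⟨T₀ ∪ Q, union_subset (hT₀.trans sdiff_subset) (hQP.trans hPu), ?_⟩
  rw [sum_union hdisj, sum_congr rfl fun j hj => hP j (hQP hj), ← card_eq_sum_ones, hQ]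
  omega

theorem exists_sum_eq_sum_add_mul {ι : Type*} [Fintype ι] (A : ι → Finset ℤ) (d : ℤ)
    (x : ι → ℤ) (t : ι → ℕ) (hx : ∀ j, x j ∈ A j) (hxt : ∀ j, x j + d * t j ∈ A j)
    {P : Finset ι} (hP : ∀ j ∈ P, t j = 1) (ht : ∀ j ∉ P, t j ≤ #P + 1) {s : ℕ}
    (hs : s ≤ ∑ j, t j) :
    ∃ f : ι → ℤ, (∀ j, f j ∈ A j) ∧ ∑ j, f j = ∑ j, x j + s * d := by
  classical
  obtain ⟨T, -, hT⟩ := exists_subset_sum_eq t (subset_univ P) hP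
    (fun j _ hj => ht j hj) hs
  refine ⟨fun j => x j + if j ∈ T then d * t j else 0, fun j => ?_, ?_⟩
  · by_cases hj : j ∈ T
    · simpa [hj] using hxt j
    · simpa [hj] using hx j
  · simp only [sum_add_distrib, sum_ite_mem, univ_inter, ← mul_sum, ← Nat.cast_sum, hT]
    ring

theorem exists_sum_eq_add_mul_of_le_card {ι : Type*} [Fintype ι] (A : ι → Finset ℤ) (d : ℤ)
    (hA : ∀ j, (A j).Nonempty) {S : Finset ι} (hS : ∀ j ∈ S, ∃ x ∈ A j, x + d ∈ A j) :
    ∃ a : ℤ, ∀ s ≤ #S, ∃ f : ι → ℤ, (∀ j, f j ∈ A j) ∧ ∑ j, f j = a + s * d := by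
  classical
  have : ∀ j, ∃ x ∈ A j, j ∈ S → x + d ∈ A j := fun j =>
    if hj : j ∈ S then (hS j hj).imp fun _ h => ⟨h.1, fun _ => h.2⟩
    else (hA j).imp fun _ h => ⟨h, fun h' => (hj h').elim⟩
  choose x hx hxd using this
  refine ⟨∑ j, x j, fun s hs => exists_sum_eq_sum_add_mul A d x (fun j => if j ∈ S then 1 else 0)
    hx (fun j => ?_) (P := S) (fun j hj => if_pos hj) (fun j hj => by simp [hj]) (by simpa)⟩
  by_cases hj : j ∈ S
  · simpa [hj] using hxd j hj
  · simpa [hj] using hx j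

theorem exists_sum_eq_add_mul_of_mul_le {ι : Type*} [Fintype ι] (A : ι → Finset ℤ) {M d : ℕ}
    (hd : 0 < d) (hA : ∀ j, A j ⊆ Icc (-M : ℤ) M) (hne : ∀ j, (A j).Nonempty) {c : ℝ}
    (hc : ∀ j, c ≤ #(A j)) {S : Finset ι} (hSM : 2 * M + 1 ≤ #S)
    (hS : ∀ j ∈ S, ∃ x ∈ A j, x + d ∈ A j) :
    ∃ a : ℤ, ∀ s : ℕ, d * s ≤ (Fintype.card ι - (2 * M + 1) : ℝ) * (c - d) →
      ∃ f : ι → ℤ, (∀ j, f j ∈ A j) ∧ ∑ j, f j = a + s * d := by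
  classical
  obtain ⟨P, hPS, hP⟩ := exists_subset_card_eq hSM
  have : ∀ j, ∃ x ∈ A j, ∃ t : ℕ, x + d * t ∈ A j ∧ (j ∈ P → t = 1) ∧
      (j ∉ P → t ≤ 2 * M ∧ c - d ≤ d * t) := by
    intro j
    by_cases hj : j ∈ P
    · obtain ⟨x, hx, hxd⟩ := hS j (hPS hj)
      exact ⟨x, hx, 1, by simpa using hxd, fun _ => rfl, fun h => (h hj).elim⟩
    · obtain ⟨x, hx, t, hxt, hcard⟩ := exists_add_mul_mem_and_card_le_mul (hne j) hd
      refine ⟨x, hx, t, hxt, fun h => (hj h).elim, fun _ => ⟨?_, ?_⟩⟩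
      · have h1 := mem_Icc.1 (hA j hx)
        have h2 := mem_Icc.1 (hA j hxt)
        have : (t : ℤ) ≤ d * t := le_mul_of_one_le_left (by positivity) (by exact_mod_cast hd)
        omega
      · have := hc j
        have : (#(A j) : ℝ) ≤ d * (t + 1) := by exact_mod_cast hcard
        linarith
  choose x hx t hxt htP htPc using this
  refine ⟨∑ j, x j, fun s hs => exists_sum_eq_sum_add_mul A d x t hx hxt htP
    (fun j hj => by have := (htPc j hj).1; omega) ?_⟩
  have hcompl : (#Pᶜ : ℝ) = Fintype.card ι - (2 * M + 1) := by
    rw [← card_compl_add_card P, hP]; push_cast; ring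
  have hsum : (d * s : ℝ) ≤ d * ∑ j, t j := calc
    (d * s : ℝ) ≤ #Pᶜ * (c - d) := hcompl ▸ hs
    _ = ∑ j ∈ Pᶜ, (c - d) := by rw [sum_const, nsmul_eq_mul]
    _ ≤ ∑ j ∈ Pᶜ, (d * t j : ℝ) := sum_le_sum fun j hj => (htPc j (mem_compl.1 hj)).2
    _ ≤ ∑ j, (d * t j : ℝ) := sum_le_sum_of_subset_of_nonneg (subset_univ _) (by intros; positivity)
    _ = d * ∑ j, t j := by rw [← mul_sum]; push_cast; rfl
  exact_mod_cast le_of_mul_le_mul_left hsum (by exact_mod_cast hd)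

theorem exists_sum_eq_add_mul_of_le_sq {ι : Type*} [Fintype ι] (A : ι → Finset ℤ)
    {M g d : ℕ} {δ B : ℝ} (hδ : 0 < δ) (hB : 0 ≤ B) (hM : 0 < M) (hd : 0 < d) (hdg : d ≤ g)
    (hA : ∀ j, A j ⊆ Icc (-M : ℤ) M) (hcard : ∀ j, δ * M ≤ #(A j))
    {S : Finset ι} (hS : ∀ j ∈ S, ∃ x ∈ A j, x + d ∈ A j) (hSM : (3 + 2 * g * B / δ) * M ≤ #S) :
    ∃ a : ℤ, ∀ i : ℕ, (i : ℝ) ≤ B * M ^ 2 →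
      ∃ f : ι → ℤ, (∀ j, f j ∈ A j) ∧ ∑ j, f j = a + i * d := by
  have hMR : (1 : ℝ) ≤ M := by exact_mod_cast hM
  have hne : ∀ j, (A j).Nonempty := fun j =>
    card_pos.1 (by exact_mod_cast (by positivity : (0 : ℝ) < δ * M).trans_le (hcard j))
  have hgB : 0 ≤ 2 * g * B / δ * M := by positivity
  rw [add_mul] at hSM
  rcases lt_or_ge (δ * M) (2 * g) with hsmall | hlarge
  · obtain ⟨a, ha⟩ := exists_sum_eq_add_mul_of_le_card A d hne hS
    refine ⟨a, fun i hi => ha i ?_⟩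
    have hMg : (M : ℝ) ≤ 2 * g / δ := by rw [le_div_iff₀ hδ]; linarith
    have : B * M ^ 2 ≤ #S := calc
      B * M ^ 2 = B * M * M := by ring
      _ ≤ B * M * (2 * g / δ) := by gcongr
      _ = 2 * g * B / δ * M := by ring
      _ ≤ #S := by linarith
    exact_mod_cast hi.trans this
  · have hcardS : (#S : ℝ) ≤ Fintype.card ι := by exact_mod_cast card_le_univ S
    obtain ⟨a, ha⟩ := exists_sum_eq_add_mul_of_mul_le A hd hA hne hcard
      (by exact_mod_cast (by linarith : (2 * M + 1 : ℝ) ≤ #S)) hS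
    refine ⟨a, fun i hi => ha i ?_⟩
    have hdgR : (d : ℝ) ≤ g := by exact_mod_cast hdg
    calc (d * i : ℝ) ≤ g * (B * M ^ 2) := by gcongr
      _ = (2 * g * B / δ * M) * (δ * M / 2) := by field_simp
      _ ≤ (Fintype.card ι - (2 * M + 1)) * (δ * M - d) := by
        gcongr ?_ * ?_ <;> linarith

theorem two_mul_lt_mul_sub_one {M g n : ℕ} {δ : ℝ} (hgδ : 4 < g * δ) (hn : δ * M ≤ n)
    (hδM : 2 ≤ δ * M) : 2 * M < g * (n - 1) := by
  have hn1 : 1 ≤ n := by exact_mod_cast (by linarith : (1 : ℝ) ≤ n)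
  have hM : (0 : ℝ) < M := Nat.cast_pos.2 (Nat.pos_of_ne_zero (by rintro rfl; norm_num at hδM))
  have : ((2 * M : ℕ) : ℝ) < (g * (n - 1) : ℕ) := by
    push_cast [hn1]
    calc 2 * (M : ℝ) < g * δ * M / 2 := by nlinarith
      _ = g * (δ * M / 2) := by ring
      _ ≤ g * (n - 1) := by gcongr; linarith
  exact_mod_cast this

theorem stmt7 (δ B : ℝ) (hδ : 0 < δ) (hB : 0 < B) :
    ∃ (C : ℝ) (d0 : ℕ), 1 ≤ C ∧ 1 ≤ d0 ∧
      ∀ (M K : ℕ) (A : Fin K → Finset ℤ),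
        C * M ≤ (K : ℝ) →
        (∀ i, A i ⊆ Finset.Icc (-(M : ℤ)) (M : ℤ)) →
        (∀ i, δ * M ≤ ((A i).card : ℝ)) →
        (2 : ℝ) ≤ δ * M →
        ∃ (a : ℤ) (d : ℕ), 1 ≤ d ∧ d ≤ d0 ∧
          ∀ i : ℕ, (i : ℝ) ≤ B * M ^ 2 →
            ∃ f : Fin K → ℤ, (∀ j, f j ∈ A j) ∧ (∑ j, f j) = a + i * d := by
  obtain ⟨g, hgδ⟩ : ∃ g : ℕ, 4 < g * δ :=
    ⟨⌊4 / δ⌋₊ + 1, by rw [← div_lt_iff₀ hδ]; exact_mod_cast Nat.lt_floor_add_one _⟩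
  have hg : 0 < g := Nat.pos_of_ne_zero (by rintro rfl; norm_num at hgδ)
  refine ⟨g * (3 + 2 * g * B / δ), g, ?_, hg, fun M K A hK hA hcard hδM => ?_⟩
  · have : (1 : ℝ) ≤ g := by exact_mod_cast hg
    nlinarith [(by positivity : 0 ≤ 2 * g * B / δ)]
  have hM : 0 < M := Nat.pos_of_ne_zero (by rintro rfl; norm_num at hδM)
  have hgap : ∀ j, ∃ x ∈ A j, ∃ e ∈ Ioo 0 g, x + (e : ℤ) ∈ A j := fun j =>
    exists_add_mem_Ioo_of_subset_Icc (L := 2 * M) (by convert hA j using 2; push_cast; ring)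
      (two_mul_lt_mul_sub_one hgδ (hcard j) hδM)
  choose x hx e he hxe using hgap
  have hK0 : 0 < K := by
    have : (0 : ℝ) < g * (3 + 2 * g * B / δ) * M := by positivity
    exact_mod_cast this.trans_le hK
  obtain ⟨d, hd, hS⟩ := exists_card_le_mul_card_fiber (s := univ) (fun j _ => he j) ⟨_, he ⟨0, hK0⟩⟩
  obtain ⟨hd0, hdg⟩ := mem_Ioo.1 hd
  have hKS : (K : ℝ) ≤ g * #{j | e j = d} := by
    rw [card_univ, Fintype.card_fin, Nat.card_Ioo] at hS
    exact_mod_cast hS.trans (Nat.mul_le_mul_right _ (Nat.sub_le g 1))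
  obtain ⟨a, ha⟩ := exists_sum_eq_add_mul_of_le_sq A hδ hB.le hM hd0 hdg.le hA hcard
    (S := {j | e j = d}) (fun j hj => ⟨x j, hx j, (mem_filter.1 hj).2 ▸ hxe j⟩)
    (le_of_mul_le_mul_left (by linarith) (by exact_mod_cast hg : (0 : ℝ) < g))
  exact ⟨a, d, hd0, hdg.le, ha⟩
end

section
/- Let a₁, …, a_n be nonzero real numbers, let α ∈ (0, 1/2], let p₁, …, p_n ∈ [α, 1−α], and let X₁, …, X_n be independent Bernoulli random variables with X_i ∼ Be(p_i). Then there exists a constant c(α) depending only on α such that for every x ∈ ℝ, the probability that a₁X₁ + ⋯ + a_nX_n = x is at most c(α)·n^{−1/2}. -/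
/-!
Write `pᵢ = α + (pᵢ - α)` and `1 - pᵢ = α + (1 - pᵢ - α)`. Expanding the probability of each point
of the cube `{0,1}ⁿ` over the set `T` of coordinates that pick the summand `α` exhibits the law of
`∑ aᵢXᵢ` as a mixture in which the coordinates in `T` are fair bits, `|T|` being binomial with
parameters `n` and `2α`. Once the coordinates outside `T` are fixed, Erdős' form of the
Littlewood–Offord lemma (Sperner's theorem, after flipping the coordinates with `aᵢ < 0`) allows
at most `C(|T|, ⌊|T|/2⌋) ≤ 2^|T| / √(|T| + 1)` of the fair configurations to hit `x`. Finally
`E[(M + 1)^(-1/2)] ≤ E[(M + 1)⁻¹]^(1/2) ≤ (2α(n + 1))^(-1/2)` for `M ∼ Bin(n, 2α)`.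
-/

open MeasureTheory ProbabilityTheory Finset
open scoped symmDiff

section LittlewoodOfford

variable {ι : Type*} [DecidableEq ι]

theorem IsAntichain.card_le_choose_half_of_subset_powerset {T : Finset ι}
    {𝒜 : Finset (Finset ι)} (h𝒜 : IsAntichain (· ⊆ ·) (𝒜 : Set (Finset ι)))
    (hT : 𝒜 ⊆ T.powerset) : #𝒜 ≤ (#T).choose (#T / 2) := by
  have hmap : ∀ u ∈ 𝒜, (u.subtype (· ∈ T)).map (Function.Embedding.subtype _) = u :=
    fun u hu => subtype_map_of_mem fun _ hx => mem_powerset.1 (hT hu) hx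
  have hinj : Set.InjOn (Finset.subtype (· ∈ T)) 𝒜 := fun u hu v hv huv => by
    rw [← hmap u hu, ← hmap v hv, huv]
  rw [← card_image_of_injOn hinj, ← Fintype.card_coe T]
  refine IsAntichain.sperner ?_
  simp only [coe_image]
  rintro _ ⟨u, hu, rfl⟩ _ ⟨v, hv, rfl⟩ hne huv
  refine h𝒜 hu hv (fun h => hne (congrArg _ h)) ?_
  rw [← hmap u hu, ← hmap v hv]
  exact map_subset_map.2 huv

theorem sum_symmDiff_abs {a : ι → ℝ} {u N : Finset ι} (hN : ∀ i ∈ N, a i ≤ 0)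
    (hu : ∀ i ∈ u \ N, 0 ≤ a i) :
    ∑ i ∈ u ∆ N, |a i| = ∑ i ∈ u, a i - ∑ i ∈ N, a i := by
  rw [Finset.symmDiff_def, sum_union disjoint_sdiff_sdiff,
    sum_congr rfl fun i hi => abs_of_nonneg (hu i hi),
    sum_congr rfl fun i hi => abs_of_nonpos (hN i (mem_sdiff.1 hi).1), sum_neg_distrib,
    ← sum_inter_add_sum_sdiff u N, ← sum_inter_add_sum_sdiff N u, inter_comm]
  ring

theorem card_filter_powerset_sum_eq_le {T : Finset ι} {a : ι → ℝ} (ha : ∀ i ∈ T, a i ≠ 0)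
    (y : ℝ) : #{u ∈ T.powerset | ∑ i ∈ u, a i = y} ≤ (#T).choose (#T / 2) := by
  set N := {i ∈ T | a i < 0}
  have hsum : ∀ u ∈ {u ∈ T.powerset | ∑ i ∈ u, a i = y},
      ∑ i ∈ u ∆ N, |a i| = y - ∑ i ∈ N, a i := by
    intro u hu
    rw [mem_filter, mem_powerset] at hu
    rw [← hu.2]
    refine sum_symmDiff_abs (fun i hi => (mem_filter.1 hi).2.le) fun i hi => ?_
    rw [mem_sdiff, mem_filter, not_and, not_lt] at hi
    exact hi.2 (hu.1 hi.1)
  rw [← card_image_of_injective _ (symmDiff_left_injective N)]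
  refine IsAntichain.card_le_choose_half_of_subset_powerset ?_ ?_
  · simp only [coe_image]
    rintro _ ⟨u, hu, rfl⟩ _ ⟨v, hv, rfl⟩ hne huv
    obtain ⟨j, hjv, hju⟩ := exists_of_ssubset (huv.ssubset_of_ne hne)
    have hjT : j ∈ T := (mem_symmDiff.1 hjv).elim
      (fun h => mem_powerset.1 (mem_filter.1 hv).1 h.1) (fun h => (mem_filter.1 h.1).1)
    have := sum_lt_sum_of_subset (f := fun i => |a i|) huv hjv hju (abs_pos.2 (ha j hjT))
      fun _ _ _ => abs_nonneg _
    rw [hsum u hu, hsum v hv] at this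
    exact this.false
  · intro _ h
    obtain ⟨u, hu, rfl⟩ := mem_image.1 h
    have huT := mem_powerset.1 (mem_filter.1 hu).1
    exact mem_powerset.2 (symmDiff_le_sup.trans (sup_le huT (filter_subset _ T)))

theorem card_filter_sum_eq_sdiff_eq_le [Fintype ι] {a : ι → ℝ} {T : Finset ι}
    (ha : ∀ i ∈ T, a i ≠ 0) (x : ℝ) (σ : Finset ι) :
    #{s | ∑ i ∈ s, a i = x ∧ s \ T = σ} ≤ (#T).choose (#T / 2) := by
  refine le_trans (card_le_card_of_injOn (· ∩ T) ?_ ?_)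
    (card_filter_powerset_sum_eq_le ha (x - ∑ i ∈ σ, a i))
  · intro s hs
    simp only [coe_filter, mem_univ, true_and, Set.mem_ofPred_eq] at hs
    simp only [coe_filter, mem_powerset, inter_subset_right, true_and, Set.mem_ofPred_eq]
    rw [← hs.1, ← hs.2, ← sum_inter_add_sum_sdiff s T]
    ring
  · intro s hs t ht hst
    simp only [coe_filter, mem_univ, true_and, Set.mem_ofPred_eq] at hs ht
    rw [← sdiff_union_inter s T, ← sdiff_union_inter t T, hs.2, ht.2]
    exact congrArg _ hst

theorem sum_powerset_prod_ite_mem {R : Type*} [CommSemiring R] (U : Finset ι) (f g : ι → R) :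
    ∑ σ ∈ U.powerset, ∏ i ∈ U, (if i ∈ σ then f i else g i) = ∏ i ∈ U, (f i + g i) := by
  rw [prod_add]
  refine sum_congr rfl fun σ hσ => ?_
  rw [prod_ite, filter_mem_eq_inter, inter_eq_right.2 (mem_powerset.1 hσ), filter_notMem_eq_sdiff]

theorem sum_filter_sum_eq_prod_compl_ite_le [Fintype ι] {a : ι → ℝ} {T : Finset ι}
    (ha : ∀ i ∈ T, a i ≠ 0) (x : ℝ) {f g : ι → ℝ} (hf : ∀ i, 0 ≤ f i) (hg : ∀ i, 0 ≤ g i) :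
    ∑ s with ∑ i ∈ s, a i = x, ∏ i ∈ Tᶜ, (if i ∈ s then f i else g i) ≤
      (#T).choose (#T / 2) * ∏ i ∈ Tᶜ, (f i + g i) := by
  have hmaps : ∀ s ∈ ({s | ∑ i ∈ s, a i = x} : Finset (Finset ι)), s \ T ∈ Tᶜ.powerset :=
    fun s _ => mem_powerset.2 fun i hi => mem_compl.2 (mem_sdiff.1 hi).2
  rw [← sum_fiberwise_of_maps_to hmaps, ← sum_powerset_prod_ite_mem, mul_sum]
  gcongr with σ
  have hfiber : ∀ s : Finset ι, s \ T = σ →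
      ∏ i ∈ Tᶜ, (if i ∈ s then f i else g i) = ∏ i ∈ Tᶜ, (if i ∈ σ then f i else g i) :=
    fun s hs => prod_congr rfl fun i hi => by
      simp only [← hs, mem_sdiff, mem_compl.1 hi, not_false_eq_true, and_true]
  rw [sum_congr rfl fun s hs => hfiber s (mem_filter.1 hs).2, sum_const, nsmul_eq_mul,
    filter_filter]
  gcongr
  · exact prod_nonneg fun i _ => by split_ifs <;> simp [hf, hg]
  · exact_mod_cast card_filter_sum_eq_sdiff_eq_le ha x σ

theorem sum_filter_sum_eq_prod_ite_le [Fintype ι] {a : ι → ℝ} (ha : ∀ i, a i ≠ 0) {α : ℝ}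
    (hα : 0 ≤ α) {p : ι → ℝ} (hp : ∀ i, α ≤ p i ∧ p i ≤ 1 - α) (x : ℝ) :
    ∑ s with ∑ i ∈ s, a i = x, ∏ i, (if i ∈ s then p i else 1 - p i) ≤
      ∑ m ∈ range (Fintype.card ι + 1), (Fintype.card ι).choose m *
        (α ^ m * (m.choose (m / 2) * (1 - 2 * α) ^ (Fintype.card ι - m))) := by
  have hexpand : ∀ s : Finset ι, ∏ i, (if i ∈ s then p i else 1 - p i) =
      ∑ T ∈ univ.powerset, α ^ #T * ∏ i ∈ Tᶜ, (if i ∈ s then p i - α else 1 - p i - α) := by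
    intro s
    calc ∏ i, (if i ∈ s then p i else 1 - p i)
        = ∏ i, (α + if i ∈ s then p i - α else 1 - p i - α) :=
          prod_congr rfl fun i _ => by split_ifs <;> ring
      _ = _ := by simp only [prod_add, prod_const, compl_eq_univ_sdiff]
  have hr : ∀ i, (p i - α) + (1 - p i - α) = 1 - 2 * α := fun i => by ring
  calc ∑ s with ∑ i ∈ s, a i = x, ∏ i, (if i ∈ s then p i else 1 - p i)
      = ∑ T ∈ univ.powerset, α ^ #T * ∑ s with ∑ i ∈ s, a i = x,
          ∏ i ∈ Tᶜ, (if i ∈ s then p i - α else 1 - p i - α) := by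
        simp only [hexpand, mul_sum]
        exact sum_comm
    _ ≤ ∑ T ∈ (univ : Finset ι).powerset, α ^ #T * ((#T).choose (#T / 2) *
          ∏ i ∈ Tᶜ, ((p i - α) + (1 - p i - α))) := by
        gcongr with T
        exact sum_filter_sum_eq_prod_compl_ite_le (fun i _ => ha i) x
          (fun i => by linarith [hp i]) (fun i => by linarith [hp i])
    _ = ∑ T ∈ (univ : Finset ι).powerset, α ^ #T * ((#T).choose (#T / 2) *
          (1 - 2 * α) ^ (Fintype.card ι - #T)) := by
        simp only [hr, prod_const, card_compl]
    _ = _ := by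
        rw [sum_powerset_apply_card (fun m => α ^ m * (m.choose (m / 2) *
          (1 - 2 * α) ^ (Fintype.card ι - m)))]
        simp only [card_univ, nsmul_eq_mul]

end LittlewoodOfford

theorem Nat.centralBinom_sq_mul_le (n : ℕ) : n.centralBinom ^ 2 * (2 * n + 1) ≤ 16 ^ n := by
  induction n with
  | zero => simp
  | succ n ih =>
    have hrec := Nat.succ_mul_centralBinom_succ n
    refine Nat.le_of_mul_le_mul_left ?_ (by positivity : 0 < (n + 1) ^ 2)
    calc (n + 1) ^ 2 * ((n + 1).centralBinom ^ 2 * (2 * (n + 1) + 1))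
        = (4 * (2 * n + 1) * (2 * n + 3)) * (n.centralBinom ^ 2 * (2 * n + 1)) := by
          rw [← mul_assoc, ← mul_pow, hrec]; ring
      _ ≤ (16 * (n + 1) ^ 2) * 16 ^ n := Nat.mul_le_mul (by nlinarith) ih
      _ = (n + 1) ^ 2 * 16 ^ (n + 1) := by ring

theorem Nat.choose_half_sq_mul_le (m : ℕ) : m.choose (m / 2) ^ 2 * (m + 1) ≤ 4 ^ m := by
  obtain ⟨k, rfl | rfl⟩ := m.even_or_odd'
  · have h := Nat.centralBinom_sq_mul_le k
    rw [Nat.centralBinom_eq_two_mul_choose] at h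
    rwa [Nat.mul_div_cancel_left k two_pos, pow_mul]
  · have h := Nat.centralBinom_sq_mul_le (k + 1)
    rw [Nat.centralBinom_eq_two_mul_choose, show 2 * (k + 1) = 2 * k + 1 + 1 by ring,
      Nat.choose_succ_succ, Nat.choose_symm_half] at h
    rw [show (2 * k + 1) / 2 = k by omega,
      show 4 ^ (2 * k + 1) = 4 * 16 ^ k by rw [pow_succ, pow_mul]; ring]
    rw [show 16 ^ (k + 1) = 16 * 16 ^ k by ring] at h
    nlinarith

theorem choose_half_le_two_pow_div_sqrt (m : ℕ) :
    (m.choose (m / 2) : ℝ) ≤ 2 ^ m / √(m + 1) := by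
  rw [le_div_iff₀ (by positivity), ← Real.sqrt_sq (by positivity : (0 : ℝ) ≤ 2 ^ m),
    ← Real.sqrt_sq (Nat.cast_nonneg (m.choose (m / 2))), ← Real.sqrt_mul (by positivity)]
  gcongr
  rw [← pow_mul, mul_comm m, pow_mul]
  exact_mod_cast Nat.choose_half_sq_mul_le m

theorem sum_choose_mul_pow_div_succ_le {q : ℝ} (hq0 : 0 < q) (hq1 : q ≤ 1) (n : ℕ) :
    ∑ m ∈ range (n + 1), n.choose m * q ^ m * (1 - q) ^ (n - m) / (m + 1) ≤
      (q * (n + 1))⁻¹ := by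
  set B : ℕ → ℝ := fun j => (n + 1).choose j * q ^ j * (1 - q) ^ (n + 1 - j)
  have hB : ∀ m ∈ range (n + 1),
      n.choose m * q ^ m * (1 - q) ^ (n - m) / (m + 1) = (q * (n + 1))⁻¹ * B (m + 1) := by
    intro m _
    have hchoose : ((n + 1 : ℕ) * n.choose m : ℝ) = (n + 1).choose (m + 1) * (m + 1) := by
      exact_mod_cast Nat.add_one_mul_choose_eq n m
    simp only [B, Nat.add_sub_add_right]
    field_simp
    push_cast at hchoose
    rw [pow_succ]
    linear_combination q ^ m * (1 - q) ^ (n - m) * q * hchoose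
  have hBsum : ∑ j ∈ range (n + 1 + 1), B j = 1 := by
    simpa [B, add_pow, mul_comm, mul_assoc, mul_left_comm] using (add_pow q (1 - q) (n + 1)).symm
  rw [sum_congr rfl hB, ← mul_sum]
  refine mul_le_of_le_one_right (by positivity) ?_
  rw [← hBsum, sum_range_succ' B (n + 1)]
  exact le_add_of_nonneg_right (by positivity)

theorem sum_choose_mul_pow_div_sqrt_le {q : ℝ} (hq0 : 0 < q) (hq1 : q ≤ 1) (n : ℕ) :
    ∑ m ∈ range (n + 1), n.choose m * q ^ m * (1 - q) ^ (n - m) / √(m + 1) ≤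
      √((q * (n + 1))⁻¹) := by
  set W : ℕ → ℝ := fun m => n.choose m * q ^ m * (1 - q) ^ (n - m)
  have hW : ∀ m, 0 ≤ W m := fun m => by
    have : 0 ≤ 1 - q := by linarith
    positivity
  have hWsum : ∑ m ∈ range (n + 1), W m = 1 := by
    simpa [W, add_pow, mul_comm, mul_assoc, mul_left_comm] using (add_pow q (1 - q) n).symm
  calc ∑ m ∈ range (n + 1), W m / √(m + 1)
      = ∑ m ∈ range (n + 1), √(W m) * √(W m / (m + 1)) := sum_congr rfl fun m _ => by
        rw [Real.sqrt_div (hW m), ← mul_div_assoc, Real.mul_self_sqrt (hW m)]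
    _ ≤ √(∑ m ∈ range (n + 1), W m) * √(∑ m ∈ range (n + 1), W m / (m + 1)) :=
        Real.sum_sqrt_mul_sqrt_le _ hW fun m => div_nonneg (hW m) (by positivity)
    _ ≤ √((q * (n + 1))⁻¹) := by
        rw [hWsum, Real.sqrt_one, one_mul]
        exact Real.sqrt_le_sqrt (sum_choose_mul_pow_div_succ_le hq0 hq1 n)

theorem sum_choose_mul_pow_mul_choose_half_le {α : ℝ} (hα : 0 < α) (hα' : α ≤ 1 / 2) (n : ℕ) :
    ∑ m ∈ range (n + 1), n.choose m * (α ^ m * (m.choose (m / 2) * (1 - 2 * α) ^ (n - m))) ≤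
      √((2 * α * (n + 1))⁻¹) := by
  have h2α : 0 ≤ 1 - 2 * α := by linarith
  refine le_trans (sum_le_sum fun m _ => ?_)
    (sum_choose_mul_pow_div_sqrt_le (by positivity) (by linarith) n)
  calc (n.choose m : ℝ) * (α ^ m * (m.choose (m / 2) * (1 - 2 * α) ^ (n - m)))
      ≤ n.choose m * (α ^ m * (2 ^ m / √(m + 1) * (1 - 2 * α) ^ (n - m))) := by
        gcongr
        exact choose_half_le_two_pow_div_sqrt m
    _ = n.choose m * (2 * α) ^ m * (1 - 2 * α) ^ (n - m) / √(m + 1) := by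
        rw [mul_pow]; ring

section Bernoulli

variable {Ω ι : Type*} {mΩ : MeasurableSpace Ω} {μ : Measure Ω}

theorem ae_eq_zero_or_eq_one [IsProbabilityMeasure μ] {Y : Ω → ℝ} (hY : Measurable Y)
    (h : μ {ω | Y ω = 0} + μ {ω | Y ω = 1} = 1) : ∀ᵐ ω ∂μ, Y ω = 0 ∨ Y ω = 1 := by
  have hmeas : ∀ c : ℝ, MeasurableSet {ω | Y ω = c} :=
    fun c => measurableSet_eq_fun hY measurable_const
  have hdisj : Disjoint {ω | Y ω = 0} {ω | Y ω = 1} :=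
    Set.disjoint_left.2 fun ω h0 h1 => by simp_all
  rw [← measure_union hdisj (hmeas 1)] at h
  exact mem_ae_iff.2 ((prob_compl_eq_zero_iff ((hmeas 0).union (hmeas 1))).2 h)

theorem measure_sum_mul_eq_le [Fintype ι] [DecidableEq ι] {X : ι → Ω → ℝ} (hX : iIndepFun X μ)
    (h01 : ∀ i, ∀ᵐ ω ∂μ, X i ω = 0 ∨ X i ω = 1) (a : ι → ℝ) (x : ℝ) :
    μ {ω | ∑ i, a i * X i ω = x} ≤
      ∑ s with ∑ i ∈ s, a i = x, ∏ i, μ {ω | X i ω = if i ∈ s then 1 else 0} := by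
  set D : Finset ι → Set Ω := fun s => ⋂ i, {ω | X i ω = if i ∈ s then 1 else 0}
  calc μ {ω | ∑ i, a i * X i ω = x}
      ≤ μ (⋃ s ∈ ({s | ∑ i ∈ s, a i = x} : Finset (Finset ι)), D s) := by
        refine measure_mono_ae ?_
        filter_upwards [ae_all_iff.2 h01] with ω hω hx
        set s : Finset ι := {i | X i ω = 1}
        have hXs : ∀ i, X i ω = if i ∈ s then 1 else 0 := fun i => by
          rcases hω i with h | h <;> simp [s, h]
        refine Set.mem_biUnion (x := s) ?_ (Set.mem_iInter.2 fun i => hXs i)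
        change ∑ i, a i * X i ω = x at hx
        simp only [hXs, mul_ite, mul_one, mul_zero, sum_ite_mem, univ_inter] at hx
        simpa using hx
    _ ≤ ∑ s with ∑ i ∈ s, a i = x, μ (D s) := measure_biUnion_finset_le _ _
    _ = _ := sum_congr rfl fun s _ =>
        hX.meas_iInter fun i => ⟨{if i ∈ s then 1 else 0}, measurableSet_singleton _, rfl⟩

theorem toReal_measure_sum_mul_eq_le [IsProbabilityMeasure μ] [Fintype ι] [DecidableEq ι]
    {X : ι → Ω → ℝ} (hXm : ∀ i, Measurable (X i)) (hX : iIndepFun X μ) {p : ι → ℝ}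
    (hp : ∀ i, 0 ≤ p i ∧ p i ≤ 1)
    (hlaw : ∀ i, μ {ω | X i ω = 1} = ENNReal.ofReal (p i) ∧
      μ {ω | X i ω = 0} = ENNReal.ofReal (1 - p i)) (a : ι → ℝ) (x : ℝ) :
    (μ {ω | ∑ i, a i * X i ω = x}).toReal ≤
      ∑ s with ∑ i ∈ s, a i = x, ∏ i, (if i ∈ s then p i else 1 - p i) := by
  have hw : ∀ (s : Finset ι) i, 0 ≤ if i ∈ s then p i else 1 - p i := fun s i => by
    split_ifs <;> linarith [hp i]
  have h01 : ∀ i, ∀ᵐ ω ∂μ, X i ω = 0 ∨ X i ω = 1 := fun i => by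
    refine ae_eq_zero_or_eq_one (hXm i) ?_
    rw [(hlaw i).1, (hlaw i).2, ← ENNReal.ofReal_add (by linarith [hp i]) (hp i).1]
    simp
  refine ENNReal.toReal_le_of_le_ofReal (sum_nonneg fun s _ => prod_nonneg fun i _ => hw s i) ?_
  refine (measure_sum_mul_eq_le hX h01 a x).trans_eq ?_
  rw [ENNReal.ofReal_sum_of_nonneg fun s _ => prod_nonneg fun i _ => hw s i]
  refine sum_congr rfl fun s _ => ?_
  rw [ENNReal.ofReal_prod_of_nonneg fun i _ => hw s i]
  refine prod_congr rfl fun i _ => ?_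
  split_ifs
  · exact (hlaw i).1
  · exact (hlaw i).2

end Bernoulli

theorem stmt8 (α : ℝ) (hα : 0 < α) (hα' : α ≤ 1 / 2) :
    ∃ c : ℝ, ∀ (n : ℕ), 0 < n → ∀ (a : Fin n → ℝ) (p : Fin n → ℝ)
      (Ω : Type) (mΩ : MeasurableSpace Ω) (μ : Measure Ω), IsProbabilityMeasure μ →
      ∀ (X : Fin n → Ω → ℝ),
        (∀ i, a i ≠ 0) →
        (∀ i, α ≤ p i ∧ p i ≤ 1 - α) →
        (∀ i, Measurable (X i)) →
        iIndepFun X μ →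
        (∀ i, μ {ω | X i ω = 1} = ENNReal.ofReal (p i) ∧
              μ {ω | X i ω = 0} = ENNReal.ofReal (1 - p i)) →
        ∀ x : ℝ, (μ {ω | (∑ i, a i * X i ω) = x}).toReal ≤
          c * (n : ℝ) ^ (-(1 : ℝ) / 2) := by
  refine ⟨√((2 * α)⁻¹), fun n hn a p Ω _ μ hμ X ha hp hXm hX hlaw x => ?_⟩
  have hp01 : ∀ i, 0 ≤ p i ∧ p i ≤ 1 := fun i => ⟨by linarith [hp i], by linarith [hp i]⟩
  calc (μ {ω | ∑ i, a i * X i ω = x}).toReal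
      ≤ ∑ s with ∑ i ∈ s, a i = x, ∏ i, (if i ∈ s then p i else 1 - p i) :=
        toReal_measure_sum_mul_eq_le hXm hX hp01 hlaw a x
    _ ≤ ∑ m ∈ range (n + 1), n.choose m * (α ^ m * (m.choose (m / 2) * (1 - 2 * α) ^ (n - m))) := by
        simpa using sum_filter_sum_eq_prod_ite_le ha hα.le hp x
    _ ≤ √((2 * α * (n + 1))⁻¹) := sum_choose_mul_pow_mul_choose_half_le hα hα' n
    _ ≤ √((2 * α)⁻¹) * (n : ℝ) ^ (-(1 : ℝ) / 2) := by
        rw [neg_div, Real.rpow_neg (Nat.cast_nonneg n), ← Real.sqrt_eq_rpow, ← Real.sqrt_inv,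
          ← Real.sqrt_mul (by positivity), ← mul_inv]
        have : (0 : ℝ) < n := Nat.cast_pos.2 hn
        gcongr
        linarith
end

section
/- For every δ > 0 there exists c(δ) such that the following holds. Let G = (V1, V2, E) be a bipartite graph, let x, y ∈ V1 with |N(x) △ N(y)| ≥ δ|V2|, and let W be a uniformly random subset of V2. Then P(|N(x) ∩ W| = |N(y) ∩ W|) ≤ c(δ)·|V2|^{−1/2}. -/
/-!
Write `A = N(x) \ N(y)` and `B = N(y) \ N(x)`, so that `A ∪ B = N(x) △ N(y)` has `m ≥ δ|V2|`
elements. The event `d^W(x) = d^W(y)` only depends on `W ∩ (A ∪ B)`, and it becomes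
`|(A ∪ B) ∩ W'| = |A|` after the involution `W ↦ W' = A △ W`. Hence exactly
`C(m, |A|) · 2^(|V2| - m)` sets `W` satisfy it, and `C(m, |A|) ≤ 2^m / √m` since
`C(2k, k)² (3k + 1) ≤ 16^k`; the factor `3k + 1` (rather than `2k`) is what makes this
inequality inductive.
-/

open Finset

open scoped symmDiff

namespace Nat

theorem centralBinom_sq_mul_le_sixteen_pow (k : ℕ) :
    centralBinom k ^ 2 * (3 * k + 1) ≤ 16 ^ k := by
  induction k with
  | zero => simp
  | succ k ih =>
    refine Nat.le_of_mul_le_mul_left ?_ (by positivity : 0 < (k + 1) ^ 2)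
    have hpoly : (2 * k + 1) ^ 2 * (3 * (k + 1) + 1) ≤ 4 * (k + 1) ^ 2 * (3 * k + 1) := by
      ring_nf; omega
    calc (k + 1) ^ 2 * (centralBinom (k + 1) ^ 2 * (3 * (k + 1) + 1))
        = 4 * centralBinom k ^ 2 * ((2 * k + 1) ^ 2 * (3 * (k + 1) + 1)) := by
          rw [← mul_assoc, ← mul_pow, succ_mul_centralBinom_succ]; ring
      _ ≤ 4 * centralBinom k ^ 2 * (4 * (k + 1) ^ 2 * (3 * k + 1)) := by gcongr
      _ = 16 * (k + 1) ^ 2 * (centralBinom k ^ 2 * (3 * k + 1)) := by ring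
      _ ≤ 16 * (k + 1) ^ 2 * 16 ^ k := by gcongr
      _ = (k + 1) ^ 2 * 16 ^ (k + 1) := by ring

theorem choose_sq_mul_le_four_pow (n r : ℕ) : n.choose r ^ 2 * n ≤ 4 ^ n := by
  refine le_trans (Nat.mul_le_mul_right n (Nat.pow_le_pow_left (choose_le_middle r n) 2)) ?_
  obtain ⟨k, rfl | rfl⟩ := even_or_odd' n
  · rw [Nat.mul_div_cancel_left k two_pos, ← centralBinom_eq_two_mul_choose, pow_mul]
    calc centralBinom k ^ 2 * (2 * k) ≤ centralBinom k ^ 2 * (3 * k + 1) := by gcongr; omega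
      _ ≤ (4 ^ 2) ^ k := centralBinom_sq_mul_le_sixteen_pow k
  · have hcentral : centralBinom (k + 1) = 2 * (2 * k + 1).choose k := by
      rw [centralBinom_eq_two_mul_choose, show 2 * (k + 1) = 2 * k + 1 + 1 by ring,
        choose_succ_succ', choose_symm_half]
      ring
    have h := centralBinom_sq_mul_le_sixteen_pow (k + 1)
    rw [hcentral, mul_pow, pow_succ 16] at h
    rw [show (2 * k + 1) / 2 = k by omega]
    calc (2 * k + 1).choose k ^ 2 * (2 * k + 1)
        ≤ (2 * k + 1).choose k ^ 2 * (3 * (k + 1) + 1) := Nat.mul_le_mul_left _ (by omega)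
      _ ≤ 16 ^ k * 4 := by linarith
      _ = 4 ^ (2 * k + 1) := by rw [pow_succ, pow_mul]; norm_num

theorem choose_mul_sqrt_le_two_pow (n r : ℕ) : (n.choose r : ℝ) * √n ≤ 2 ^ n := by
  refine (pow_le_pow_iff_left₀ (by positivity) (by positivity) two_ne_zero).1 ?_
  rw [mul_pow, Real.sq_sqrt n.cast_nonneg, ← pow_mul, mul_comm n, pow_mul]
  exact_mod_cast choose_sq_mul_le_four_pow n r

theorem choose_mul_two_pow_sub_mul_sqrt_le {m n : ℕ} (hmn : m ≤ n) (r : ℕ) :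
    (m.choose r : ℝ) * 2 ^ (n - m) * √m ≤ 2 ^ n :=
  calc (m.choose r : ℝ) * 2 ^ (n - m) * √m = m.choose r * √m * 2 ^ (n - m) := by ring
    _ ≤ 2 ^ m * 2 ^ (n - m) := by gcongr; exact choose_mul_sqrt_le_two_pow m r
    _ = 2 ^ n := by rw [← pow_add, Nat.add_sub_cancel' hmn]

end Nat

namespace Finset

variable {V : Type*} [DecidableEq V]

theorem card_inter_eq_card_inter_iff_sdiff (s t W : Finset V) :
    #(s ∩ W) = #(t ∩ W) ↔ #((s \ t) ∩ W) = #((t \ s) ∩ W) := by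
  have hsplit (s t : Finset V) : #(s ∩ W) = #((s \ t) ∩ W) + #((s ∩ t) ∩ W) := by
    rw [← card_union_of_disjoint, ← union_inter_distrib_right, sdiff_union_inter]
    exact (disjoint_sdiff_inter s t).mono inter_subset_left inter_subset_left
  rw [hsplit s t, hsplit t s, inter_comm t s]
  omega

theorem card_union_inter_symmDiff_add {A B : Finset V} (hAB : Disjoint A B) (W : Finset V) :
    #((A ∪ B) ∩ (A ∆ W)) + #(A ∩ W) = #A + #(B ∩ W) := by
  have hsplit : (A ∪ B) ∩ (A ∆ W) = A \ W ∪ B ∩ W := by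
    ext v
    have := @disjoint_left.1 hAB v
    simp only [mem_inter, mem_union, mem_symmDiff, mem_sdiff]
    tauto
  rw [hsplit, card_union_of_disjoint (hAB.mono sdiff_subset inter_subset_left),
    ← card_sdiff_add_card_inter A W]
  ring

variable [Fintype V]

theorem card_filter_inter_eq {S T : Finset V} (hT : T ⊆ S) :
    #{W : Finset V | S ∩ W = T} = 2 ^ (Fintype.card V - #S) := by
  rw [← card_compl, ← card_powerset]
  refine card_bij' (fun W _ => W \ S) (fun U _ => T ∪ U) (fun W _ => ?_) (fun U hU => ?_)
    (fun W hW => ?_) (fun U hU => ?_)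
  all_goals simp only [mem_filter, mem_univ, true_and, mem_powerset,
    subset_compl_iff_disjoint_left] at *
  · exact disjoint_sdiff
  · rw [inter_union_distrib_left, inter_eq_right.2 hT, disjoint_iff_inter_eq_empty.1 hU,
      union_empty]
  · rw [← hW, inter_comm]
    exact sup_inf_sdiff W S
  · rw [union_sdiff_distrib, sdiff_eq_empty_iff_subset.2 hT, empty_union,
      sdiff_eq_self_of_disjoint hU.symm]

theorem card_filter_card_inter_eq (S : Finset V) (k : ℕ) :
    #{W : Finset V | #(S ∩ W) = k} = (#S).choose k * 2 ^ (Fintype.card V - #S) := by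
  rw [card_eq_sum_card_fiberwise (f := (S ∩ ·)) (t := powersetCard k S), ← card_powersetCard,
    ← smul_eq_mul, ← sum_const]
  · refine sum_congr rfl fun T hT => ?_
    obtain ⟨hTS, hTk⟩ := mem_powersetCard.1 hT
    rw [← card_filter_inter_eq hTS, filter_filter]
    exact congrArg card (filter_congr fun W _ => ⟨And.right, fun h => ⟨h ▸ hTk, h⟩⟩)
  · exact fun W hW => mem_powersetCard.2 ⟨inter_subset_left, (mem_filter.1 hW).2⟩

theorem card_filter_card_inter_eq_card_inter_of_disjoint {A B : Finset V}
    (hAB : Disjoint A B) :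
    #{W : Finset V | #(A ∩ W) = #(B ∩ W)} = #{W : Finset V | #((A ∪ B) ∩ W) = #A} := by
  have hcard := card_union_inter_symmDiff_add hAB
  refine card_bij' (fun W _ => A ∆ W) (fun W _ => A ∆ W) (fun W hW => ?_) (fun W hW => ?_)
    (fun _ _ => symmDiff_symmDiff_cancel_left ..) (fun _ _ => symmDiff_symmDiff_cancel_left ..)
  all_goals simp only [mem_filter, mem_univ, true_and] at hW ⊢
  · have := hcard W
    omega
  · have := hcard (A ∆ W)
    rw [symmDiff_symmDiff_cancel_left] at this
    omega

theorem card_filter_card_inter_eq_card_inter (s t : Finset V) :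
    #{W : Finset V | #(s ∩ W) = #(t ∩ W)} =
      (#(s ∆ t)).choose #(s \ t) * 2 ^ (Fintype.card V - #(s ∆ t)) := by
  rw [filter_congr fun W _ => card_inter_eq_card_inter_iff_sdiff s t W,
    card_filter_card_inter_eq_card_inter_of_disjoint disjoint_sdiff_sdiff,
    card_filter_card_inter_eq, Finset.symmDiff_def]

end Finset

theorem stmt9 (δ : ℝ) (hδ : 0 < δ) :
    ∃ c : ℝ, ∀ (V1 V2 : Type) [Fintype V1] [Fintype V2] [DecidableEq V2] [Nonempty V2]
      (E : V1 → V2 → Prop) [∀ a b, Decidable (E a b)] (x y : V1),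
      δ * Fintype.card V2 ≤ ((symmDiff (nbr E x) (nbr E y)).card : ℝ) →
      (((Finset.univ : Finset (Finset V2)).filter
          (fun W => (nbr E x ∩ W).card = (nbr E y ∩ W).card)).card : ℝ) ≤
        c * (Fintype.card V2 : ℝ) ^ (-(1 : ℝ) / 2) * 2 ^ (Fintype.card V2) := by
  refine ⟨(√δ)⁻¹, fun V1 V2 _ _ _ _ E _ x y hδm => ?_⟩
  set n := Fintype.card V2
  set m := #(nbr E x ∆ nbr E y)
  have hn : (0 : ℝ) < n := by exact_mod_cast Fintype.card_pos
  have hm : (0 : ℝ) < m := lt_of_lt_of_le (by positivity) hδm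
  have hmn : m ≤ n := card_le_univ _
  calc (#{W : Finset V2 | #(nbr E x ∩ W) = #(nbr E y ∩ W)} : ℝ)
      = m.choose #(nbr E x \ nbr E y) * 2 ^ (n - m) := by
        exact_mod_cast card_filter_card_inter_eq_card_inter _ _
    _ ≤ 2 ^ n / √m := by
        rw [le_div_iff₀ (Real.sqrt_pos.2 hm)]
        exact Nat.choose_mul_two_pow_sub_mul_sqrt_le hmn _
    _ ≤ 2 ^ n / √(δ * n) := by gcongr
    _ = (√δ)⁻¹ * (n : ℝ) ^ (-(1 : ℝ) / 2) * 2 ^ n := by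
        rw [Real.sqrt_mul hδ.le, neg_div, Real.rpow_neg hn.le, ← Real.sqrt_eq_rpow]
        field_simp
end

section
/- For every ε > 0 there exists δ > 0 such that the following holds. Let G = (V1, V2, E) be a bipartite graph with |V1| ≥ |V2|/2 and let P = {p₁, …, p_k} with k = |V2|^{0.5} be an ε-pair-matching in V1, where p_i = (x_i, y_i). If W ⊆ V2 is chosen uniformly at random, then with probability at least 3/4 the set A = {d^W(x_i) − d^W(y_i) : i ∈ [k]} ∩ [−3|V2|^{0.5}, 3|V2|^{0.5}] has size at least δ|V2|^{0.5}. -/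
/-!
Write `n = |V₂|`, `Dᵢ(W) = d^W(xᵢ) - d^W(yᵢ)`, and `σ_W(v) = ±1` according to whether `v ∈ W`.
Then `2 Dᵢ(W) - (d(xᵢ) - d(yᵢ)) = ∑ᵥ gᵥ σ_W(v)` with `|gᵥ| ≤ 1`; the signs `σ_W(u)`, `σ_W(v)`
are orthogonal over `W` for `u ≠ v`, so this sum has second moment at most `n`. As
`0 ≤ d(xᵢ) - d(yᵢ) ≤ √n`, Chebyshev bounds the probability of `|Dᵢ(W)| > 3√n` by `1/25`.

For `i ≠ j`, `Dᵢ(W) - Dⱼ(W) = ∑_{v ∈ W} c_v` with `c_v ≥ 1` on `S = (N(xᵢ) \ N(yᵢ)) \ N(xⱼ)`,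
`|S| ≥ εn`. Once `W \ S` is fixed, the sets `W ∩ S` with `Dᵢ(W) = Dⱼ(W)` form an antichain, so by
Sperner (the Erdős–Littlewood–Offord argument) a collision has probability at most
`C(s, s/2) / 2^s ≤ 1/√(s + 1) ≤ 1/√(εn)`.

By Markov, with probability at least `3/4` at most half of the `Dᵢ(W)` leave `[-3√n, 3√n]` and
there are at most `(8/√ε) k` ordered collisions; Cauchy–Schwarz then leaves at least
`k / (4 (1 + 8/√ε))` distinct values in the window, and `√n ≤ 2k`.
-/

open Finset

def IsPairMatching {V1 V2 : Type} [Fintype V2] [DecidableEq V2]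
    (E : V1 → V2 → Prop) [∀ a b, Decidable (E a b)] (ε : ℝ) (k : ℕ)
    (x y : Fin k → V1) : Prop :=
  (∀ i j : Fin k, x i ≠ y j) ∧
  (∀ i j : Fin k, i ≠ j → x i ≠ x j ∧ y i ≠ y j) ∧
  (∀ i : Fin k, (nbr E (y i)).card ≤ (nbr E (x i)).card ∧
      ((nbr E (x i)).card : ℝ) - ((nbr E (y i)).card : ℝ) ≤ Real.sqrt (Fintype.card V2)) ∧
  (∀ i j : Fin k, i ≠ j →
      ε * Fintype.card V2 ≤ (((nbr E (x i) \ nbr E (y i)) \ nbr E (x j)).card : ℝ) ∧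
      ε * Fintype.card V2 ≤ (((nbr E (x i) \ nbr E (y i)) \ nbr E (y j)).card : ℝ))

theorem Nat.two_mul_add_one_mul_centralBinom_sq_le (m : ℕ) :
    (2 * m + 1) * m.centralBinom ^ 2 ≤ 16 ^ m := by
  induction m with
  | zero => simp
  | succ m ih =>
    refine Nat.le_of_mul_le_mul_left (c := (m + 1) ^ 2) ?_ (pow_pos m.succ_pos 2)
    calc (m + 1) ^ 2 * ((2 * (m + 1) + 1) * (m + 1).centralBinom ^ 2)
        = (2 * m + 3) * ((m + 1) * (m + 1).centralBinom) ^ 2 := by ring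
      _ = 4 * (2 * m + 1) * (2 * m + 3) * ((2 * m + 1) * m.centralBinom ^ 2) := by
          rw [Nat.succ_mul_centralBinom_succ]; ring
      _ ≤ 4 * (2 * m + 1) * (2 * m + 3) * 16 ^ m := Nat.mul_le_mul_left _ ih
      _ ≤ 16 * (m + 1) ^ 2 * 16 ^ m := Nat.mul_le_mul_right _ (by nlinarith)
      _ = (m + 1) ^ 2 * 16 ^ (m + 1) := by ring

theorem Nat.succ_mul_choose_half_sq_le (s : ℕ) : (s + 1) * s.choose (s / 2) ^ 2 ≤ 4 ^ s := by
  obtain ⟨m, rfl | rfl⟩ := Nat.even_or_odd' s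
  · rw [Nat.mul_div_cancel_left m two_pos, ← Nat.centralBinom_eq_two_mul_choose, pow_mul]
    exact Nat.two_mul_add_one_mul_centralBinom_sq_le m
  · have hcb : (m + 1).centralBinom = 2 * (2 * m + 1).choose m := by
      rw [Nat.centralBinom_eq_two_mul_choose, mul_add_one, Nat.choose_succ_succ,
        Nat.choose_symm_half]
      ring
    have h := Nat.two_mul_add_one_mul_centralBinom_sq_le (m + 1)
    rw [hcb] at h
    rw [show (2 * m + 1) / 2 = m by omega]
    refine Nat.le_of_mul_le_mul_left (c := 4) ?_ four_pos
    calc 4 * ((2 * m + 1 + 1) * (2 * m + 1).choose m ^ 2)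
        ≤ (2 * (m + 1) + 1) * (2 * (2 * m + 1).choose m) ^ 2 := by nlinarith
      _ ≤ 16 ^ (m + 1) := h
      _ = 4 * 4 ^ (2 * m + 1) := by rw [pow_succ, pow_succ, pow_mul]; ring

theorem Nat.choose_half_mul_sqrt_le (s : ℕ) : (s.choose (s / 2) : ℝ) * √(s + 1) ≤ 2 ^ s := by
  refine (pow_le_pow_iff_left₀ (by positivity) (by positivity) two_ne_zero).1 ?_
  rw [mul_pow, Real.sq_sqrt (by positivity), ← pow_mul, mul_comm s, pow_mul, mul_comm]
  exact_mod_cast Nat.succ_mul_choose_half_sq_le s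

section Rademacher

variable {α : Type*} [Fintype α] [DecidableEq α]

def spin (W : Finset α) (v : α) : ℝ := if v ∈ W then 1 else -1

theorem sum_spin_mul_spin_of_ne {u v : α} (h : u ≠ v) :
    ∑ W : Finset α, spin W u * spin W v = 0 := by
  have hflip : ∑ W : Finset α, spin W u * spin W v = ∑ W : Finset α, -(spin W u * spin W v) := by
    rw [← Equiv.sum_comp (symmDiff_right_involutive ({u} : Finset α)).toPerm]
    refine sum_congr rfl fun W _ => ?_
    simp only [Function.Involutive.coe_toPerm, spin, mem_symmDiff, mem_singleton, h.symm]
    split_ifs <;> simp_all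
  rw [sum_neg_distrib] at hflip
  linarith

theorem sum_sq_sum_mul_spin (g : α → ℝ) :
    ∑ W : Finset α, (∑ v, g v * spin W v) ^ 2 = 2 ^ Fintype.card α * ∑ v, g v ^ 2 := by
  calc ∑ W : Finset α, (∑ v, g v * spin W v) ^ 2
      = ∑ u, ∑ v, g u * g v * ∑ W : Finset α, spin W u * spin W v := by
        simp_rw [sq, sum_mul_sum, mul_sum]
        rw [sum_comm]
        refine sum_congr rfl fun u _ => ?_
        rw [sum_comm]
        exact sum_congr rfl fun v _ => sum_congr rfl fun W _ => by ring
    _ = ∑ u, g u * g u * ∑ W : Finset α, spin W u * spin W u :=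
        sum_congr rfl fun u _ => sum_eq_single u
          (fun v _ hvu => by rw [sum_spin_mul_spin_of_ne (Ne.symm hvu), mul_zero])
          (by simp)
    _ = 2 ^ Fintype.card α * ∑ v, g v ^ 2 := by
        have hsq : ∀ (W : Finset α) u, spin W u * spin W u = 1 := by
          intro W u; unfold spin; split_ifs <;> norm_num
        simp [hsq, mul_sum, sq, mul_comm]

theorem sum_mul_spin (g : α → ℝ) (W : Finset α) :
    ∑ v, g v * spin W v = 2 * ∑ v ∈ W, g v - ∑ v, g v := by
  have hv : ∀ v, g v * spin W v = 2 * (if v ∈ W then g v else 0) - g v := by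
    intro v; unfold spin; split_ifs <;> ring
  simp_rw [hv, sum_sub_distrib, ← mul_sum, sum_ite_mem, univ_inter]

theorem card_filter_lt_abs_sum_mul_spin_mul_sq_le (g : α → ℝ) {t : ℝ} (ht : 0 ≤ t) :
    (#{W : Finset α | t < |∑ v, g v * spin W v|} : ℝ) * t ^ 2
      ≤ 2 ^ Fintype.card α * ∑ v, g v ^ 2 := by
  rw [← sum_sq_sum_mul_spin, ← nsmul_eq_mul]
  calc #{W : Finset α | t < |∑ v, g v * spin W v|} • t ^ 2
      ≤ ∑ W ∈ {W : Finset α | t < |∑ v, g v * spin W v|}, (∑ v, g v * spin W v) ^ 2 :=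
        card_nsmul_le_sum _ _ _ fun W hW => by
          rw [← sq_abs (∑ v, _)]
          exact pow_le_pow_left₀ ht (mem_filter.1 hW).2.le 2
    _ ≤ ∑ W : Finset α, (∑ v, g v * spin W v) ^ 2 :=
        sum_le_sum_of_subset_of_nonneg (subset_univ _) fun _ _ _ => sq_nonneg _

end Rademacher

section LittlewoodOfford

variable {α : Type*} [Fintype α]

theorem card_filter_sum_eq_le_choose_of_pos (c : α → ℝ) (hc : ∀ v, 0 < c v) (t : ℝ) :
    #{W : Finset α | ∑ v ∈ W, c v = t} ≤ (Fintype.card α).choose (Fintype.card α / 2) := by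
  refine IsAntichain.sperner fun W₁ h₁ W₂ h₂ hne hsub => ?_
  obtain ⟨v, hv₂, hv₁⟩ := exists_of_ssubset (lt_of_le_of_ne hsub hne)
  have := sum_lt_sum_of_subset hsub hv₂ hv₁ (hc v) fun w _ _ => (hc w).le
  simp only [coe_filter, mem_univ, true_and, Set.mem_ofPred_eq] at h₁ h₂
  linarith

theorem card_filter_sum_eq_le [DecidableEq α] (c : α → ℝ) (S : Finset α)
    (hc : ∀ v ∈ S, 0 < c v) (t : ℝ) :
    #{W : Finset α | ∑ v ∈ W, c v = t} ≤ 2 ^ (Fintype.card α - #S) * (#S).choose (#S / 2) := by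
  have hfiber (T : Finset α) :
      #{W ∈ {W : Finset α | ∑ v ∈ W, c v = t} | W \ S = T} ≤ (#S).choose (#S / 2) := by
    rw [← Fintype.card_coe S]
    refine (card_le_card_of_injOn (fun W => W.subtype (· ∈ S)) (fun W hW => ?_) ?_).trans
      (card_filter_sum_eq_le_choose_of_pos (fun v : S => c v) (fun v => hc v v.2)
        (t - ∑ v ∈ T, c v))
    · simp only [coe_filter, mem_filter, mem_univ, true_and, Set.mem_ofPred_eq] at hW ⊢
      rw [← hW.2, ← hW.1, ← sum_filter_add_sum_filter_not W (· ∈ S), filter_notMem_eq_sdiff,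
        ← subtype_map, sum_map]
      simp
    · intro W₁ h₁ W₂ h₂ heq
      simp only [coe_filter, mem_filter, mem_univ, true_and, Set.mem_ofPred_eq] at h₁ h₂
      ext v
      by_cases hv : v ∈ S
      · simpa [hv] using congrArg (⟨v, hv⟩ ∈ ·) heq
      · simpa [hv] using congrArg (v ∈ ·) (h₁.2.trans h₂.2.symm)
  calc #{W : Finset α | ∑ v ∈ W, c v = t}
      = ∑ T ∈ (univ \ S).powerset, #{W ∈ {W : Finset α | ∑ v ∈ W, c v = t} | W \ S = T} :=
        card_eq_sum_card_fiberwise fun W _ => by simp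
    _ ≤ ∑ T ∈ (univ \ S).powerset, (#S).choose (#S / 2) := sum_le_sum fun T _ => hfiber T
    _ = 2 ^ (Fintype.card α - #S) * (#S).choose (#S / 2) := by
        rw [sum_const, card_powerset, card_univ_sdiff, smul_eq_mul]

theorem card_filter_sum_eq_mul_sqrt_le [DecidableEq α] (c : α → ℝ) (S : Finset α)
    (hc : ∀ v ∈ S, 0 < c v) (t : ℝ) :
    (#{W : Finset α | ∑ v ∈ W, c v = t} : ℝ) * √(#S + 1) ≤ 2 ^ Fintype.card α := by
  have hS : #S ≤ Fintype.card α := card_le_univ S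
  calc (#{W : Finset α | ∑ v ∈ W, c v = t} : ℝ) * √(#S + 1)
      ≤ 2 ^ (Fintype.card α - #S) * ((#S).choose (#S / 2) * √(#S + 1)) := by
        rw [← mul_assoc]
        gcongr
        exact_mod_cast card_filter_sum_eq_le c S hc t
    _ ≤ 2 ^ (Fintype.card α - #S) * 2 ^ #S := by gcongr; exact Nat.choose_half_mul_sqrt_le _
    _ = 2 ^ Fintype.card α := by rw [← pow_add, Nat.sub_add_cancel hS]

end LittlewoodOfford

section Cuts

variable {α : Type*} [DecidableEq α]

def cutDiff (A B W : Finset α) : ℤ := #(A ∩ W) - #(B ∩ W)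

def signedIndicator (A B : Finset α) (v : α) : ℝ :=
  (if v ∈ A then 1 else 0) - if v ∈ B then 1 else 0

theorem cutDiff_eq_sum (A B W : Finset α) :
    (cutDiff A B W : ℝ) = ∑ v ∈ W, signedIndicator A B v := by
  simp [cutDiff, signedIndicator, sum_sub_distrib, inter_comm]

theorem card_filter_lt_abs_cutDiff_le [Fintype α] (A B : Finset α) (hBA : #B ≤ #A)
    (hAB : (#A : ℝ) - #B ≤ √(Fintype.card α)) (hn : 0 < Fintype.card α) :
    (#{W : Finset α | 3 * √(Fintype.card α) < |(cutDiff A B W : ℝ)|} : ℝ) * 25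
      ≤ 2 ^ Fintype.card α := by
  set n := Fintype.card α
  set g := signedIndicator A B
  have hsum : ∑ v, g v = #A - #B := by simpa [cutDiff] using (cutDiff_eq_sum A B univ).symm
  have hsq : ∑ v, g v ^ 2 ≤ n := by
    calc ∑ v, g v ^ 2 ≤ ∑ _v : α, (1 : ℝ) :=
          sum_le_sum fun v _ => by unfold g signedIndicator; split_ifs <;> norm_num
      _ = n := by simp [n]
  have hBA' : (#B : ℝ) ≤ #A := by exact_mod_cast hBA
  -- as `0 ≤ |A| - |B| ≤ √n`, `|D| > 3√n` forces the Rademacher sum `2D - (|A| - |B|)` beyond `5√n`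
  have hsub : ({W | 3 * √n < |(cutDiff A B W : ℝ)|} : Finset (Finset α))
      ⊆ ({W | 5 * √n < |∑ v, g v * spin W v|} : Finset (Finset α)) := by
    intro W hW
    simp only [mem_filter, mem_univ, true_and, cutDiff_eq_sum] at hW ⊢
    rw [sum_mul_spin, hsum]
    have := abs_sub_abs_le_abs_sub (2 * ∑ v ∈ W, g v) (#A - #B)
    rw [abs_mul, abs_two, abs_of_nonneg (sub_nonneg.2 hBA')] at this
    linarith
  have hn' : (0 : ℝ) < n := by exact_mod_cast hn
  have key : (#{W : Finset α | 3 * √n < |(cutDiff A B W : ℝ)|} : ℝ) * (25 * n) ≤ 2 ^ n * n :=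
    calc _ ≤ (#{W : Finset α | 5 * √n < |∑ v, g v * spin W v|} : ℝ) * (25 * n) := by
          gcongr
      _ = (#{W : Finset α | 5 * √n < |∑ v, g v * spin W v|} : ℝ) * (5 * √n) ^ 2 := by
          rw [mul_pow, Real.sq_sqrt hn'.le]; norm_num
      _ ≤ 2 ^ n * ∑ v, g v ^ 2 := card_filter_lt_abs_sum_mul_spin_mul_sq_le g (by positivity)
      _ ≤ 2 ^ n * n := by gcongr
  nlinarith

theorem card_filter_cutDiff_eq_mul_sqrt_le [Fintype α] (A₁ B₁ A₂ B₂ : Finset α) :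
    (#{W : Finset α | cutDiff A₁ B₁ W = cutDiff A₂ B₂ W} : ℝ) * √(#((A₁ \ B₁) \ A₂) + 1)
      ≤ 2 ^ Fintype.card α := by
  set c := fun v => signedIndicator A₁ B₁ v - signedIndicator A₂ B₂ v
  have hc : ∀ v ∈ (A₁ \ B₁) \ A₂, 0 < c v := by
    intro v hv
    obtain ⟨⟨hA₁, hB₁⟩, hA₂⟩ := mem_sdiff.1 hv |>.imp_left mem_sdiff.1
    simp only [c, signedIndicator, hA₁, hB₁, hA₂, if_true, if_false]
    split_ifs <;> norm_num
  have hW : ∀ W : Finset α, cutDiff A₁ B₁ W = cutDiff A₂ B₂ W ↔ ∑ v ∈ W, c v = 0 := by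
    intro W
    rw [sum_sub_distrib, ← cutDiff_eq_sum, ← cutDiff_eq_sum, sub_eq_zero, Int.cast_inj]
  simp_rw [hW]
  exact card_filter_sum_eq_mul_sqrt_le c _ hc 0

end Cuts

theorem card_filter_lt_card_filter_mul_le {ι γ : Type*} [Fintype ι] [Fintype γ]
    (p : ι → γ → Prop) [∀ i w, Decidable (p i w)] (a : ℝ) {b : ℝ}
    (hb : ∀ i, (#{w | p i w} : ℝ) ≤ b) :
    (#{w | a < #{i | p i w}} : ℝ) * a ≤ Fintype.card ι * b := by
  calc (#{w | a < #{i | p i w}} : ℝ) * a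
      ≤ ∑ w ∈ {w | a < #{i | p i w}}, (#{i | p i w} : ℝ) := by
        rw [← nsmul_eq_mul]
        exact card_nsmul_le_sum _ _ _ fun w hw => (mem_filter.1 hw).2.le
    _ ≤ ∑ w, (#{i | p i w} : ℝ) :=
        sum_le_sum_of_subset_of_nonneg (subset_univ _) fun _ _ _ => Nat.cast_nonneg _
    _ = ∑ i, (#{w | p i w} : ℝ) := by simp only [card_filter, Nat.cast_sum]; exact sum_comm
    _ ≤ Fintype.card ι * b := by
        simpa using sum_le_sum fun i (_ : i ∈ univ) => hb i

theorem sq_card_le_card_image_mul_card_filter_eq {ι β : Type*} [DecidableEq ι] [DecidableEq β]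
    (s : Finset ι) (f : ι → β) :
    #s ^ 2 ≤ #(s.image f) * #{q ∈ s ×ˢ s | f q.1 = f q.2} := by
  have hpairs : #{q ∈ s ×ˢ s | f q.1 = f q.2} = ∑ b ∈ s.image f, #{i ∈ s | f i = b} ^ 2 := by
    rw [card_eq_sum_card_fiberwise (f := fun q => f q.1) (t := s.image f)
      fun q hq => mem_image_of_mem f (mem_product.1 (mem_filter.1 hq).1).1]
    refine sum_congr rfl fun b _ => ?_
    rw [sq, ← card_product]
    congr 1
    ext ⟨i, j⟩
    simp only [mem_filter, mem_product]
    constructor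
    · rintro ⟨⟨⟨hi, hj⟩, hij⟩, rfl⟩; exact ⟨⟨hi, rfl⟩, hj, hij.symm⟩
    · rintro ⟨⟨hi, rfl⟩, hj, hji⟩; exact ⟨⟨⟨hi, hj⟩, hji.symm⟩, rfl⟩
  rw [hpairs, card_eq_sum_card_image f s]
  exact sq_sum_le_card_mul_sum_sq

theorem card_le_mul_card_filter_image {ι β : Type*} [Fintype ι] [DecidableEq ι] [DecidableEq β]
    (f : ι → β) (p : β → Prop) [DecidablePred p] {C : ℝ} (hC : 0 ≤ C)
    (hout : (#{i | ¬ p (f i)} : ℝ) ≤ Fintype.card ι / 2)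
    (hcoll : (#{q : ι × ι | q.1 ≠ q.2 ∧ f q.1 = f q.2} : ℝ) ≤ C * Fintype.card ι) :
    (Fintype.card ι : ℝ) ≤ 4 * (1 + C) * #{b ∈ univ.image f | p b} := by
  set I : Finset ι := {i | p (f i)}
  have hI : (Fintype.card ι : ℝ) / 2 ≤ #I := by
    have := card_filter_add_card_filter_not (s := univ) (fun i => p (f i))
    rw [card_univ] at this
    have : (#I : ℝ) + #{i | ¬ p (f i)} = Fintype.card ι := by exact_mod_cast this
    linarith
  have himage : #(I.image f) ≤ #{b ∈ univ.image f | p b} := by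
    refine card_le_card fun b hb => ?_
    obtain ⟨i, hi, rfl⟩ := mem_image.1 hb
    exact mem_filter.2 ⟨mem_image_of_mem f (mem_univ i), (mem_filter.1 hi).2⟩
  have hpairs : (#{q ∈ I ×ˢ I | f q.1 = f q.2} : ℝ) ≤ #I + C * Fintype.card ι := by
    have hsplit : {q ∈ I ×ˢ I | f q.1 = f q.2}
        ⊆ I.diag ∪ ({q : ι × ι | q.1 ≠ q.2 ∧ f q.1 = f q.2} : Finset (ι × ι)) := by
      intro q hq
      by_cases h : q.1 = q.2 <;> simp_all
    calc (#{q ∈ I ×ˢ I | f q.1 = f q.2} : ℝ)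
        ≤ #I.diag + #{q : ι × ι | q.1 ≠ q.2 ∧ f q.1 = f q.2} := by
          exact_mod_cast (card_le_card hsplit).trans (card_union_le _ _)
      _ ≤ #I + C * Fintype.card ι := by rw [diag_card]; gcongr
  have hk : (#I : ℝ) ≤ Fintype.card ι := by exact_mod_cast card_le_univ I
  have hCS : (#I : ℝ) ^ 2 ≤ #{b ∈ univ.image f | p b} * ((1 + C) * Fintype.card ι) := by
    calc (#I : ℝ) ^ 2 ≤ #(I.image f) * #{q ∈ I ×ˢ I | f q.1 = f q.2} := by
          exact_mod_cast sq_card_le_card_image_mul_card_filter_eq I f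
      _ ≤ #{b ∈ univ.image f | p b} * ((1 + C) * Fintype.card ι) := by
          gcongr; linarith
  have hk0 : (0 : ℝ) ≤ Fintype.card ι := Nat.cast_nonneg _
  have hsq : ((Fintype.card ι : ℝ) / 2) ^ 2 ≤ (#I : ℝ) ^ 2 := pow_le_pow_left₀ (by positivity) hI 2
  rcases hk0.eq_or_lt with hzero | hpos
  · rw [← hzero]; positivity
  · nlinarith

theorem card_sub_sub_le_card_filter {γ : Type*} [Fintype γ] {P Q R : γ → Prop}
    [DecidablePred P] [DecidablePred Q] [DecidablePred R] {a b : ℝ}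
    (hP : (#{w | P w} : ℝ) ≤ a) (hQ : (#{w | Q w} : ℝ) ≤ b) (h : ∀ w, ¬ P w → ¬ Q w → R w) :
    (Fintype.card γ : ℝ) - a - b ≤ #{w | R w} := by
  classical
  have hcover : univ ⊆ (univ.filter P ∪ univ.filter Q) ∪ univ.filter R := by
    intro w _
    by_cases hP : P w <;> by_cases hQ : Q w <;> simp_all
  have := (card_le_card hcover).trans
    ((card_union_le _ _).trans (Nat.add_le_add_right (card_union_le _ _) _))
  rw [card_univ] at this
  have : (Fintype.card γ : ℝ) ≤ #{w | P w} + #{w | Q w} + #{w | R w} := by exact_mod_cast this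
  linarith

section PairMatching

variable {α : Type*} [Fintype α] [DecidableEq α] {k : ℕ} (A B : Fin k → Finset α)

theorem card_filter_many_large_cutDiff_le (hn : 0 < Fintype.card α) (hk : 0 < k)
    (hdeg : ∀ i, #(B i) ≤ #(A i) ∧ (#(A i) : ℝ) - #(B i) ≤ √(Fintype.card α)) :
    (#{W : Finset α | (k : ℝ) / 2 <
        #{i | 3 * √(Fintype.card α) < |(cutDiff (A i) (B i) W : ℝ)|}} : ℝ)
      ≤ 2 ^ Fintype.card α / 8 := by
  have hmarkov := card_filter_lt_card_filter_mul_le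
    (fun i W => 3 * √(Fintype.card α) < |(cutDiff (A i) (B i) W : ℝ)|) ((k : ℝ) / 2)
    (b := 2 ^ Fintype.card α / 25) fun i => by
      linarith [card_filter_lt_abs_cutDiff_le (A i) (B i) (hdeg i).1 (hdeg i).2 hn]
  rw [Fintype.card_fin] at hmarkov
  have hk' : (0 : ℝ) < k := by exact_mod_cast hk
  have h2 : (0 : ℝ) < 2 ^ Fintype.card α := by positivity
  nlinarith

theorem card_filter_many_cutDiff_collisions_le {ε : ℝ} (hε : 0 < ε) (hn : 0 < Fintype.card α)
    (hk : 0 < k) (hkn : (k : ℝ) ≤ √(Fintype.card α))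
    (hsep : ∀ i j, i ≠ j → ε * Fintype.card α ≤ #((A i \ B i) \ A j)) :
    (#{W : Finset α | 8 / √ε * k < #{q : Fin k × Fin k |
        q.1 ≠ q.2 ∧ cutDiff (A q.1) (B q.1) W = cutDiff (A q.2) (B q.2) W}} : ℝ)
      ≤ 2 ^ Fintype.card α / 8 := by
  set n := Fintype.card α
  have hεn : 0 < √ε * √n := by positivity
  have hpair : ∀ q : Fin k × Fin k, (#{W : Finset α |
      q.1 ≠ q.2 ∧ cutDiff (A q.1) (B q.1) W = cutDiff (A q.2) (B q.2) W} : ℝ)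
        ≤ 2 ^ n / (√ε * √n) := by
    rintro ⟨i, j⟩
    by_cases hij : i = j
    · simp only [hij, ne_eq, not_true_eq_false, false_and, filter_false, card_empty,
        Nat.cast_zero]
      positivity
    · simp only [ne_eq, hij, not_false_eq_true, true_and]
      rw [le_div_iff₀ hεn, ← Real.sqrt_mul hε.le]
      refine le_trans ?_ (card_filter_cutDiff_eq_mul_sqrt_le (A i) (B i) (A j) (B j))
      gcongr
      linarith [hsep i j hij]
  have hmarkov := card_filter_lt_card_filter_mul_le _ (8 / √ε * k) hpair
  rw [Fintype.card_prod, Fintype.card_fin] at hmarkov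
  have hpos : 0 < 8 / √ε * k := by positivity
  refine le_of_mul_le_mul_right (hmarkov.trans ?_) hpos
  calc ((k * k : ℕ) : ℝ) * (2 ^ n / (√ε * √n)) = 8 / √ε * k * (k / √n * 2 ^ n / 8) := by
        push_cast; field_simp
    _ ≤ 8 / √ε * k * (2 ^ n / 8) := by
        gcongr
        exact mul_le_of_le_one_left (by positivity) ((div_le_one (by positivity)).2 hkn)
    _ = 2 ^ n / 8 * (8 / √ε * k) := by ring

end PairMatching

theorem stmt14 (ε : ℝ) (hε : 0 < ε) :
    ∃ δ : ℝ, 0 < δ ∧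
      ∀ (V1 V2 : Type) [Fintype V1] [Fintype V2] [DecidableEq V2]
        (E : V1 → V2 → Prop) [∀ a b, Decidable (E a b)]
        (k : ℕ), k = Nat.sqrt (Fintype.card V2) →
        (Fintype.card V2 : ℝ) / 2 ≤ Fintype.card V1 →
        ∀ x y : Fin k → V1, IsPairMatching E ε k x y →
        (3 : ℝ) / 4 * 2 ^ (Fintype.card V2) ≤
          (((Finset.univ : Finset (Finset V2)).filter (fun W =>
            δ * Real.sqrt (Fintype.card V2) ≤
              ((((Finset.univ : Finset (Fin k)).image (fun i =>
                    ((nbr E (x i) ∩ W).card : ℤ) - ((nbr E (y i) ∩ W).card : ℤ))).filter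
                  (fun z : ℤ => ((|z| : ℤ) : ℝ) ≤ 3 * Real.sqrt (Fintype.card V2))).card : ℝ))).card : ℝ) := by
  refine ⟨1 / (8 * (1 + 8 / √ε)), by positivity, ?_⟩
  rintro V1 V2 _ _ _ E _ k hk - x y ⟨-, -, hdeg, hsep⟩
  rcases (Fintype.card V2).eq_zero_or_pos with hn | hn
  · norm_num [hn]
  have hk0 : 0 < k := hk ▸ Nat.sqrt_pos.2 hn
  have hkn : (k : ℝ) ≤ √(Fintype.card V2) := hk ▸ Real.nat_sqrt_le_real_sqrt
  have hnk : √(Fintype.card V2) ≤ 2 * k := by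
    have : (1 : ℝ) ≤ k := by exact_mod_cast hk0
    linarith [hk ▸ (Real.real_sqrt_le_nat_sqrt_succ (a := Fintype.card V2))]
  have hlarge := card_filter_many_large_cutDiff_le (fun i => nbr E (x i)) (fun i => nbr E (y i))
    hn hk0 hdeg
  have hcoll := card_filter_many_cutDiff_collisions_le (fun i => nbr E (x i))
    (fun i => nbr E (y i)) hε hn hk0 hkn fun i j hij => (hsep i j hij).1
  refine le_trans ?_ (card_sub_sub_le_card_filter hlarge hcoll fun W hlargeW hcollW => ?_)
  · rw [Fintype.card_finset]; push_cast; linarith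
  have hdistinct := card_le_mul_card_filter_image
    (fun i => cutDiff (nbr E (x i)) (nbr E (y i)) W)
    (fun z : ℤ => ((|z| : ℤ) : ℝ) ≤ 3 * √(Fintype.card V2)) (C := 8 / √ε) (by positivity)
    (by simpa [not_le, Int.cast_abs] using hlargeW) (by simpa using hcollW)
  rw [Fintype.card_fin] at hdistinct
  unfold cutDiff at hdistinct
  calc 1 / (8 * (1 + 8 / √ε)) * √(Fintype.card V2) ≤ 1 / (8 * (1 + 8 / √ε)) * (2 * k) := by
        gcongr
    _ ≤ _ := by rw [div_mul_eq_mul_div, div_le_iff₀ (by positivity)]; linarith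
end

section
/- For every natural number d > 1 and ε > 0 there exist L, D > 0 such that the following holds. Let G = (V1, V2, E) be a bipartite graph and let u₁, …, u_L ∈ V1 be vertices such that the sets S_i = N(u_i) \ ∪_{j<i} N(u_j) satisfy |S_i| ≥ D for all i ∈ [L]. If W is a uniformly random subset of V2, then with probability at least 1 − ε, for every pair (k, m) with 0 ≤ k ≤ m and 2 ≤ m ≤ d there exists i ∈ [L] with d^W(u_i) ≡ k (mod m). -/
/-!
Fix a residue `k` and a modulus `m ≤ d`, and let `F i` be `d - 1` vertices of the fresh part
`S i` of `N(u i)`. Whatever `W` looks like outside `F i`, some choice of `W ∩ F i` puts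
`d^W(u i)` in the class of `k`, while the degrees of the earlier `u j` do not see `F i` at all.
Hence, conditionally on the previous steps, `u i` misses the class of `k` with probability at
most `1 - 2^{-(d-1)}`, so all of `u 0, …, u (L-1)` miss it with probability at most
`(1 - 2^{-(d-1)})^L`. A union bound over the fewer than `(d + 1)^2` pairs `(k, m)` finishes.
-/

open Finset

lemma Nat.exists_lt_add_modEq {m : ℕ} (hm : 0 < m) (r k : ℕ) : ∃ a < m, r + a ≡ k [MOD m] := by
  have : NeZero m := NeZero.of_pos hm
  refine ⟨((k : ZMod m) - r).val, ZMod.val_lt _, ?_⟩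
  rw [← ZMod.natCast_eq_natCast_iff]
  push_cast [ZMod.natCast_zmod_val]
  ring

lemma one_sub_inv_two_pow_nonneg (c : ℕ) : (0 : ℝ) ≤ 1 - 2⁻¹ ^ c :=
  sub_nonneg.2 (pow_le_one₀ (by norm_num) (by norm_num))

section Resampling

variable {α : Type*} [DecidableEq α]

lemma inter_eq_of_sdiff_eq {N F Y W : Finset α} (hNF : Disjoint N F) (h : Y \ F = W \ F) :
    N ∩ Y = N ∩ W := by
  ext x
  have hx := congrArg (x ∈ ·) h
  have := @disjoint_left.1 hNF x
  simp at hx ⊢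
  tauto

lemma exists_sdiff_eq_card_inter_modEq {N F : Finset α} {m : ℕ} (hFN : F ⊆ N) (hm : 0 < m)
    (hF : m ≤ #F + 1) (k : ℕ) (W : Finset α) : ∃ Y, Y \ F = W \ F ∧ #(N ∩ Y) ≡ k [MOD m] := by
  obtain ⟨a, ham, hmod⟩ := Nat.exists_lt_add_modEq hm #(N ∩ (W \ F)) k
  obtain ⟨A, hAF, rfl⟩ := exists_subset_card_eq (show a ≤ #F by omega)
  refine ⟨(W \ F) ∪ A, by rw [union_sdiff_distrib, Finset.sdiff_idem,
    sdiff_eq_empty_iff_subset.2 hAF, union_empty], ?_⟩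
  have hNY : N ∩ ((W \ F) ∪ A) = N ∩ (W \ F) ∪ A := by
    rw [inter_union_distrib_left, inter_eq_right.2 (hAF.trans hFN)]
  have hdisj : Disjoint (N ∩ (W \ F)) A :=
    disjoint_of_subset_right hAF (disjoint_of_subset_left inter_subset_right sdiff_disjoint)
  rwa [hNY, card_union_of_disjoint hdisj]

variable [Fintype α]

lemma card_filter_sdiff_eq (F X : Finset α) : #{Y : Finset α | Y \ F = X \ F} = 2 ^ #F := by
  rw [← card_powerset]
  refine card_nbij' (· ∩ F) ((X \ F) ∪ ·) ?_ ?_ ?_ ?_ <;> intro Y hY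
  · simp
  · simp only [coe_powerset, Set.mem_preimage, Set.mem_powerset_iff, coe_subset] at hY
    simp only [coe_filter, mem_univ, true_and, Set.mem_ofPred_eq]
    ext x; have := @hY x; simp; tauto
  · simp only [coe_filter, mem_univ, true_and, Set.mem_ofPred_eq] at hY
    ext x; have := congrArg (x ∈ ·) hY; simp at this ⊢; tauto
  · simp only [coe_powerset, Set.mem_preimage, Set.mem_powerset_iff, coe_subset] at hY
    ext x; have := @hY x; simp; tauto

lemma card_filter_not_le_of_forall_sdiff_eq (F : Finset α) {B : Finset (Finset α)}
    (P : Finset α → Prop) [DecidablePred P]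
    (hB : ∀ W ∈ B, ∀ Y, Y \ F = W \ F → Y ∈ B) (hP : ∀ W, ∃ Y, Y \ F = W \ F ∧ P Y) :
    (#{W ∈ B | ¬ P W} : ℝ) ≤ (1 - 2⁻¹ ^ #F) * #B := by
  have hcount : #{W ∈ B | ¬ P W} * 2 ^ #F ≤ #B * (2 ^ #F - 1) := by
    refine card_mul_le_card_mul (fun W X => W \ F = X \ F) (fun W hW => ?_) (fun X hX => ?_)
    · rw [← card_filter_sdiff_eq F W]
      refine card_le_card fun Y hY => ?_
      have hY : Y \ F = W \ F := (mem_filter.1 hY).2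
      exact mem_filter.2 ⟨hB W (mem_filter.1 hW).1 Y hY, hY.symm⟩
    · obtain ⟨Y, hYX, hPY⟩ := hP X
      calc #(bipartiteBelow _ _ X)
          ≤ #(({Z : Finset α | Z \ F = X \ F} : Finset _).erase Y) := by
            refine card_le_card fun W hW => ?_
            simp only [mem_bipartiteBelow, mem_filter] at hW
            simp only [mem_erase, mem_filter, mem_univ, true_and]
            exact ⟨by rintro rfl; exact hW.1.2 hPY, hW.2⟩
        _ = 2 ^ #F - 1 := by
            rw [card_erase_of_mem (by simpa using hYX), card_filter_sdiff_eq]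
  have hcount' : (#{W ∈ B | ¬ P W} : ℝ) * 2 ^ #F ≤ #B * (2 ^ #F - 1) := by
    have h := (Nat.cast_le (α := ℝ)).2 hcount
    push_cast [Nat.cast_sub Nat.one_le_two_pow] at h
    exact h
  rw [← mul_le_mul_iff_of_pos_right (by positivity : (0 : ℝ) < 2 ^ #F)]
  calc _ ≤ _ := hcount'
    _ = (1 - 2⁻¹ ^ #F) * #B * 2 ^ #F := by
      rw [inv_pow]; field_simp

variable {ι : Type*} [LinearOrder ι]

lemma card_forall_not_modEq_le (N F : ι → Finset α) {m c : ℕ} (hm : 0 < m) (hmc : m ≤ c + 1)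
    (hFN : ∀ i, F i ⊆ N i) (hF : ∀ i, c ≤ #(F i)) (hNF : ∀ i j, i < j → Disjoint (N i) (F j))
    (k : ℕ) (T : Finset ι) :
    (#{W : Finset α | ∀ i ∈ T, ¬ #(N i ∩ W) ≡ k [MOD m]} : ℝ) ≤
      (1 - 2⁻¹ ^ c) ^ #T * 2 ^ Fintype.card α := by
  classical
  induction T using Finset.induction_on_max with
  | empty => simp [card_univ]
  | insert a T haT ih =>
    have hfilter : ({W : Finset α | ∀ i ∈ insert a T, ¬ #(N i ∩ W) ≡ k [MOD m]} : Finset _) =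
        {W ∈ ({W : Finset α | ∀ i ∈ T, ¬ #(N i ∩ W) ≡ k [MOD m]} : Finset _) |
          ¬ #(N a ∩ W) ≡ k [MOD m]} := by
      ext W; simp only [mem_filter, mem_univ, true_and, forall_mem_insert]; tauto
    -- Resampling only `c` vertices of `F a`: the bound `1 - 2⁻¹ ^ #F'` gets worse as `F'` grows.
    obtain ⟨F', hF'a, hF'c⟩ := exists_subset_card_eq (hF a)
    have hstep := card_filter_not_le_of_forall_sdiff_eq F' (fun W => #(N a ∩ W) ≡ k [MOD m])
      (B := {W : Finset α | ∀ i ∈ T, ¬ #(N i ∩ W) ≡ k [MOD m]})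
      (fun W hW Y hY => by
        simp only [mem_filter, mem_univ, true_and] at hW ⊢
        intro i hi
        rw [inter_eq_of_sdiff_eq ((hNF i a (haT i hi)).mono_right hF'a) hY]
        exact hW i hi)
      (exists_sdiff_eq_card_inter_modEq (hF'a.trans (hFN a)) hm (by omega) k)
    rw [hF'c] at hstep
    rw [hfilter, card_insert_of_notMem fun h => (haT a h).false, pow_succ', mul_assoc]
    exact hstep.trans (mul_le_mul_of_nonneg_left ih (one_sub_inv_two_pow_nonneg c))

variable [Fintype ι]

lemma card_forall_not_modEq_le_of_le_card_sdiff (N : ι → Finset α) {m c : ℕ}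
    (hm : 0 < m) (hmc : m ≤ c + 1) (hN : ∀ i, c ≤ #(N i \ ({j | j < i} : Finset ι).biUnion N))
    (k : ℕ) :
    (#{W : Finset α | ∀ i, ¬ #(N i ∩ W) ≡ k [MOD m]} : ℝ) ≤
      (1 - 2⁻¹ ^ c) ^ Fintype.card ι * 2 ^ Fintype.card α := by
  have hNF (i j : ι) (hij : i < j) : Disjoint (N i) (N j \ ({l | l < j} : Finset ι).biUnion N) :=
    disjoint_sdiff.mono_left (subset_biUnion_of_mem N (by simpa using hij))
  simpa using card_forall_not_modEq_le N _ hm hmc (fun _ => sdiff_subset) hN hNF k univ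

open scoped Classical in
lemma le_card_forall_exists_modEq (N : ι → Finset α) {d : ℕ}
    (hN : ∀ i, d - 1 ≤ #(N i \ ({j | j < i} : Finset ι).biUnion N)) :
    (1 - (d + 1) ^ 2 * (1 - 2⁻¹ ^ (d - 1)) ^ Fintype.card ι) * 2 ^ Fintype.card α ≤
      (#{W : Finset α | ∀ k m : ℕ, k ≤ m → 2 ≤ m → m ≤ d → ∃ i, #(N i ∩ W) ≡ k [MOD m]} : ℝ) := by
  set q : ℝ := (1 - 2⁻¹ ^ (d - 1)) ^ Fintype.card ι
  have hq : 0 ≤ q := pow_nonneg (one_sub_inv_two_pow_nonneg _) _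
  set good : Finset α → Prop :=
    fun W => ∀ k m : ℕ, k ≤ m → 2 ≤ m → m ≤ d → ∃ i, #(N i ∩ W) ≡ k [MOD m]
  set pairs := range (d + 1) ×ˢ Icc 2 d
  have hpairs : (#pairs : ℝ) ≤ (d + 1) ^ 2 := by
    have : #pairs ≤ (d + 1) ^ 2 := by
      rw [card_product, card_range, Nat.card_Icc, sq]
      exact Nat.mul_le_mul_left _ (by omega)
    exact_mod_cast this
  have hsub : ({W | ¬ good W} : Finset (Finset α)) ⊆
      pairs.biUnion fun p => {W | ∀ i, ¬ #(N i ∩ W) ≡ p.1 [MOD p.2]} := by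
    intro W hW
    simp only [good, mem_filter, mem_univ, true_and, not_forall, not_exists] at hW
    obtain ⟨k, m, hkm, h2m, hmd, hW⟩ := hW
    simp only [mem_biUnion, mem_filter, mem_univ, true_and]
    exact ⟨(k, m), by simp only [pairs, mem_product, mem_range, mem_Icc]; omega, hW⟩
  have hbad (p) (hp : p ∈ pairs) :
      (#{W : Finset α | ∀ i, ¬ #(N i ∩ W) ≡ p.1 [MOD p.2]} : ℝ) ≤ q * 2 ^ Fintype.card α := by
    simp only [pairs, mem_product, mem_range, mem_Icc] at hp
    exact card_forall_not_modEq_le_of_le_card_sdiff N (by omega) (by omega) hN p.1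
  have hnot_good : (#{W | ¬ good W} : ℝ) ≤ (d + 1) ^ 2 * q * 2 ^ Fintype.card α :=
    calc (#{W | ¬ good W} : ℝ)
        ≤ ∑ p ∈ pairs, (#{W : Finset α | ∀ i, ¬ #(N i ∩ W) ≡ p.1 [MOD p.2]} : ℝ) := by
          exact_mod_cast (card_le_card hsub).trans card_biUnion_le
      _ ≤ ∑ p ∈ pairs, q * 2 ^ Fintype.card α := sum_le_sum hbad
      _ = #pairs * q * 2 ^ Fintype.card α := by rw [sum_const, nsmul_eq_mul, mul_assoc]
      _ ≤ (d + 1) ^ 2 * q * 2 ^ Fintype.card α := by gcongr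
  have hsplit : (#{W | good W} : ℝ) + #{W | ¬ good W} = 2 ^ Fintype.card α := by
    exact_mod_cast (card_filter_add_card_filter_not good).trans (by simp [card_univ])
  linarith

end Resampling

open scoped Classical in
theorem stmt15 (d : ℕ) (hd : 1 < d) (ε : ℝ) (hε : 0 < ε) :
    ∃ L D : ℕ, 0 < L ∧ 0 < D ∧
      ∀ (V1 V2 : Type) [Fintype V1] [Fintype V2] [DecidableEq V2]
        (E : V1 → V2 → Prop) [∀ a b, Decidable (E a b)]
        (u : Fin L → V1),
        (∀ i : Fin L, D ≤ ((nbr E (u i)) \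
            (Finset.univ.filter (fun j : Fin L => j < i)).biUnion
              (fun j => nbr E (u j))).card) →
        (1 - ε) * 2 ^ (Fintype.card V2) ≤
          (((Finset.univ : Finset (Finset V2)).filter (fun W =>
              ∀ k m : ℕ, k ≤ m → 2 ≤ m → m ≤ d →
                ∃ i : Fin L, (nbr E (u i) ∩ W).card % m = k % m)).card : ℝ) := by
  set q : ℝ := 1 - 2⁻¹ ^ (d - 1)
  obtain ⟨L, hL0, hL⟩ : ∃ L, 0 < L ∧ (d + 1) ^ 2 * q ^ L < ε := by
    have hq0 : 0 ≤ q := one_sub_inv_two_pow_nonneg _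
    have hq1 : q < 1 := sub_lt_self _ (by positivity)
    have hlim := (tendsto_pow_atTop_nhds_zero_of_lt_one hq0 hq1).const_mul ((d + 1) ^ 2 : ℝ)
    rw [mul_zero] at hlim
    exact ((Filter.eventually_gt_atTop 0).and (hlim.eventually_lt_const hε)).exists
  refine ⟨L, d - 1, hL0, by omega, fun V1 V2 _ _ _ E _ u hu => ?_⟩
  have h := le_card_forall_exists_modEq (fun i => nbr E (u i)) hu
  rw [Fintype.card_fin] at h
  calc (1 - ε) * 2 ^ Fintype.card V2 ≤ (1 - (d + 1) ^ 2 * q ^ L) * 2 ^ Fintype.card V2 := by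
        gcongr
    _ ≤ _ := h
end

section
/- Let G = (V1, V2, E) be a C-bipartite-Ramsey graph with |V1| ≥ |V2|, |V2| sufficiently large, and C > 1. Let W ⊆ V2 with |W| = 2C·log₂|V2|. Then there is a subset U ⊆ V1 with |U| ≥ |V1|·2^{−|W|} such that all vertices of U have identical neighbourhoods in W; consequently |V1| ≤ |V2|^{O_C(1)}, i.e. the part sizes of a C-bipartite-Ramsey graph are polynomially related. -/
/-!
Sorting the vertices of `V1` by their trace `N(u) ∩ W` on `W` gives at most `2^|W|` classes, so
some class `U` has at least `|V1| / 2^|W|` vertices. Fix `u₀ ∈ U`: one of `N(u₀) ∩ W` and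
`W \ N(u₀)` has at least `|W| / 2 ≥ C log₂|V2|` vertices, and together with `U` it spans a
complete or an empty bipartite graph. The Ramsey property therefore forces `|U| < C log₂|V1|`,
i.e. `|V1| < C log₂|V1| · 2^|W| ≤ 2C log₂|V1| · |V2|^{2C}`, and absorbing
`log₂|V1| ≤ 4 √|V1|` gives `|V1| ≤ 64 C² |V2|^{4C} ≤ |V2|^{4C+1}` once `|V2| ≥ 64 C²`.
-/

open Finset

theorem exists_card_div_two_pow_le_card_and_forall_iff {α β : Type*} [Fintype α]
    (E : α → β → Prop) [∀ a b, Decidable (E a b)] (W : Finset β) :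
    ∃ U : Finset α, (Fintype.card α : ℝ) / 2 ^ W.card ≤ U.card ∧
      ∀ u ∈ U, ∀ u' ∈ U, ∀ w ∈ W, (E u w ↔ E u' w) := by
  classical
  obtain ⟨T, -, hT⟩ := exists_le_card_fiber_of_nsmul_le_card_of_maps_to
    (s := univ) (t := W.powerset) (f := fun u => W.filter (E u))
    (fun u _ => mem_powerset.2 (filter_subset _ _)) (powerset_nonempty W)
    (b := (Fintype.card α : ℝ) / 2 ^ W.card)
    (by rw [card_powerset, nsmul_eq_mul, card_univ]; push_cast; field_simp; rfl)
  refine ⟨_, hT, fun u hu u' hu' w hw => ?_⟩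
  simp only [mem_filter, mem_univ, true_and] at hu hu'
  simpa [hw] using congrArg (w ∈ ·) (hu.trans hu'.symm)

theorem exists_subset_card_le_two_mul_and_forall_or_forall_not {β : Type*} (p : β → Prop)
    [DecidablePred p] (W : Finset β) :
    ∃ B ⊆ W, W.card ≤ 2 * B.card ∧ ((∀ b ∈ B, p b) ∨ ∀ b ∈ B, ¬ p b) := by
  have hsplit := card_filter_add_card_filter_not (s := W) p
  by_cases h : (W.filter (¬ p ·)).card ≤ (W.filter p).card
  · exact ⟨_, filter_subset _ _, by omega, .inl fun b hb => (mem_filter.1 hb).2⟩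
  · exact ⟨_, filter_subset _ _, by omega, .inr fun b hb => (mem_filter.1 hb).2⟩

theorem BipRamsey.card_lt_of_forall_iff {V1 V2 : Type} [Fintype V1] [Fintype V2]
    {E : V1 → V2 → Prop} {C : ℝ} (hE : BipRamsey E C) {U : Finset V1} {W : Finset V2}
    (hU : ∀ u ∈ U, ∀ u' ∈ U, ∀ w ∈ W, (E u w ↔ E u' w)) (hUne : U.Nonempty)
    (hW : 2 * C * Real.logb 2 (Fintype.card V2) ≤ W.card) :
    (U.card : ℝ) < C * Real.logb 2 (Fintype.card V1) := by
  classical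
  obtain ⟨u₀, hu₀⟩ := hUne
  obtain ⟨B, hBW, hB, hhom⟩ := exists_subset_card_le_two_mul_and_forall_or_forall_not (E u₀) W
  have hBcard : C * Real.logb 2 (Fintype.card V2) ≤ B.card := by
    have : (W.card : ℝ) ≤ 2 * B.card := by exact_mod_cast hB
    linarith
  by_contra! hUcard
  refine hE U B hUcard hBcard ?_
  rcases hhom with hhom | hhom
  · exact .inl fun a ha b hb => (hU u₀ hu₀ a ha b (hBW hb)).1 (hhom b hb)
  · exact .inr fun a ha b hb hab => hhom b hb ((hU a ha u₀ hu₀ b (hBW hb)).1 hab)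

theorem Real.logb_two_le_four_mul_sqrt {x : ℝ} (hx : 0 ≤ x) : Real.logb 2 x ≤ 4 * √x := by
  have hlog : Real.log x ≤ 2 * √x := by
    simpa [Real.sqrt_eq_rpow, div_eq_mul_inv, mul_comm] using
      Real.log_le_rpow_div hx (ε := 1 / 2) (by norm_num)
  have hlog2 : 1 / 2 < Real.log 2 := by linarith [Real.log_two_gt_d9]
  rw [Real.logb, div_le_iff₀ (by linarith)]
  nlinarith [Real.sqrt_nonneg x]

theorem two_mul_mul_logb_le_self {C y : ℝ} (hC : 0 ≤ C) (hy : 64 * C ^ 2 ≤ y) :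
    2 * C * Real.logb 2 y ≤ y := by
  have hy0 : 0 ≤ y := le_trans (by positivity) hy
  have hsqrt : 8 * C ≤ √y := (Real.le_sqrt (by positivity) hy0).2 (by linarith)
  nlinarith [Real.logb_two_le_four_mul_sqrt hy0, Real.sq_sqrt hy0]

theorem two_pow_ceil_mul_logb_le {c x : ℝ} (hc : 0 ≤ c) (hx : 1 ≤ x) :
    (2 : ℝ) ^ ⌈c * Real.logb 2 x⌉₊ ≤ 2 * x ^ c := by
  have hy : 0 ≤ c * Real.logb 2 x := mul_nonneg hc (Real.logb_nonneg one_lt_two hx)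
  calc (2 : ℝ) ^ ⌈c * Real.logb 2 x⌉₊ = 2 ^ (⌈c * Real.logb 2 x⌉₊ : ℝ) :=
        (Real.rpow_natCast _ _).symm
    _ ≤ 2 ^ (c * Real.logb 2 x + 1) :=
        Real.rpow_le_rpow_of_exponent_le one_le_two (Nat.ceil_lt_add_one hy).le
    _ = 2 * x ^ c := by
        rw [Real.rpow_add two_pos, Real.rpow_one, mul_comm c, Real.rpow_mul zero_le_two,
          Real.rpow_logb two_pos (by norm_num) (by linarith), mul_comm]

theorem le_rpow_of_lt_mul_logb {C x y : ℝ} (hC : 0 < C) (hx : 0 ≤ x) (hy : 64 * C ^ 2 ≤ y)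
    (h : x < C * Real.logb 2 x * (2 * y ^ (2 * C))) : x ≤ y ^ (4 * C + 1) := by
  have hy0 : 0 < y := lt_of_lt_of_le (by positivity) hy
  have ha : 0 ≤ 8 * C * y ^ (2 * C) := by positivity
  have hx_le : x ≤ 8 * C * y ^ (2 * C) * √x :=
    calc x ≤ C * Real.logb 2 x * (2 * y ^ (2 * C)) := h.le
      _ ≤ C * (4 * √x) * (2 * y ^ (2 * C)) := by gcongr; exact Real.logb_two_le_four_mul_sqrt hx
      _ = 8 * C * y ^ (2 * C) * √x := by ring
  have hsqrt : √x ≤ 8 * C * y ^ (2 * C) := by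
    nlinarith [Real.mul_self_sqrt hx, Real.sqrt_nonneg x]
  calc x = √x ^ 2 := (Real.sq_sqrt hx).symm
    _ ≤ (8 * C * y ^ (2 * C)) ^ 2 := by gcongr
    _ = 64 * C ^ 2 * y ^ (4 * C) := by
        rw [mul_pow, ← Real.rpow_natCast (y ^ (2 * C)), ← Real.rpow_mul hy0.le]; ring_nf
    _ ≤ y * y ^ (4 * C) := by gcongr
    _ = y ^ (4 * C + 1) := by rw [Real.rpow_add_one hy0.ne']; ring

theorem stmt19 (C : ℝ) (hC : 1 < C) :
    ∃ (n0 : ℕ) (K : ℝ), ∀ (V1 V2 : Type) [Fintype V1] [Fintype V2]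
      (E : V1 → V2 → Prop) [∀ a b, Decidable (E a b)],
      BipRamsey E C →
      Fintype.card V2 ≤ Fintype.card V1 →
      n0 ≤ Fintype.card V2 →
      -- pigeonhole: every `W ⊆ V2` of size `2C log₂|V2|` admits a large set of
      -- vertices of `V1` with identical neighbourhoods in `W`
      (∀ W : Finset V2, W.card = ⌈2 * C * Real.logb 2 (Fintype.card V2)⌉₊ →
        ∃ U : Finset V1,
          (Fintype.card V1 : ℝ) * 2 ^ (-(W.card : ℝ)) ≤ (U.card : ℝ) ∧
          ∀ u ∈ U, ∀ u' ∈ U, ∀ w ∈ W, (E u w ↔ E u' w)) ∧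
      -- consequently the part sizes are polynomially related
      (Fintype.card V1 : ℝ) ≤ (Fintype.card V2 : ℝ) ^ K := by
  refine ⟨⌈64 * C ^ 2⌉₊, 4 * C + 1, fun V1 V2 _ _ E _ hE hle hn0 => ?_⟩
  have hC0 : 0 < C := by linarith
  have hn2 : 64 * C ^ 2 ≤ (Fintype.card V2 : ℝ) := Nat.ceil_le.1 hn0
  have hn2_one : 1 ≤ (Fintype.card V2 : ℝ) := by nlinarith
  have hn1 : 1 ≤ (Fintype.card V1 : ℝ) := hn2_one.trans (by exact_mod_cast hle)
  refine ⟨fun W _ => ?_, ?_⟩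
  · simpa only [Real.rpow_neg zero_le_two, Real.rpow_natCast, ← div_eq_mul_inv] using
      exists_card_div_two_pow_le_card_and_forall_iff E W
  obtain ⟨W, -, hW⟩ := exists_subset_card_eq (s := univ)
    (n := ⌈2 * C * Real.logb 2 (Fintype.card V2)⌉₊)
    (by simpa only [card_univ, Nat.ceil_le] using two_mul_mul_logb_le_self hC0.le hn2)
  obtain ⟨U, hUW, hU⟩ := exists_card_div_two_pow_le_card_and_forall_iff E W
  have hUne : U.Nonempty :=
    card_pos.1 (by exact_mod_cast (div_pos (by linarith) (by positivity)).trans_le hUW)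
  have hUsmall := hE.card_lt_of_forall_iff hU hUne (hW ▸ Nat.le_ceil _)
  refine le_rpow_of_lt_mul_logb hC0 (by linarith) hn2 ?_
  calc (Fintype.card V1 : ℝ) ≤ U.card * 2 ^ W.card := (div_le_iff₀ (by positivity)).1 hUW
    _ < C * Real.logb 2 (Fintype.card V1) * 2 ^ W.card := by gcongr
    _ ≤ C * Real.logb 2 (Fintype.card V1) * (2 * (Fintype.card V2 : ℝ) ^ (2 * C)) := by
        have : 0 ≤ Real.logb 2 (Fintype.card V1) := Real.logb_nonneg one_lt_two hn1
        rw [hW]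
        gcongr
        exact two_pow_ceil_mul_logb_le (by positivity) hn2_one
end
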